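/- arXiv:2511.21961 — 9 statements merged into one kernel-verified Lean document; each statement's English description precedes it below -/
import Mathlib

section
/- In a filter on a finite complex, if (a,b) is a shallow pair, then after removing a and b, the restriction of the filter to the remaining cells is again a filter (no reordering is necessary): every remaining cell's facets still precede it in the filter order, where the face relation after cancellation connects every facet of b to every cofacet of a. -/
/-- If `(a,b)` is a shallow pair of a filter `f` on a finite complex, then after
canceling `(a,b)` (removing `a` and `b` and toggling mod 2 the facet relation
between the other facets of `b` and the other cofacets of `a`), the restriction
of `f` to the remaining cells is again a filter: every facet of a remaining cell
still precedes it in the filter order. -/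
theorem stmt2 {C : Type*} [Fintype C] (cells : Finset C)
    (facet : C → C → Prop) (dim : C → ℤ) (f : C → ℝ)
    (hmem : ∀ x y, facet x y → x ∈ cells ∧ y ∈ cells)
    (hdim : ∀ x y, facet x y → dim x = dim y - 1)
    (hfil : ∀ x y, facet x y → f x < f y)
    (hinj : Set.InjOn f (cells : Set C))
    (a b : C) (hab : facet a b)
    (hlast : ∀ a', facet a' b → f a' ≤ f a)
    (hfirst : ∀ b', facet a b' → f b ≤ f b') :
    ∀ x y, x ∈ cells → y ∈ cells → x ≠ a → x ≠ b → y ≠ a → y ≠ b →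
      Xor' (facet x y) (facet x b ∧ facet a y) → f x < f y := by
  intro x y _ _ _ _ _ _ hxor
  rcases hxor with ⟨hxy, _⟩ | ⟨⟨hxb, hay⟩, _⟩
  · exact hfil x y hxy
  · calc f x ≤ f a := hlast x hxb
      _ < f b := hfil a b hab
      _ ≤ f y := hfirst y hay
end

section
/- Let f be a filter on a finite complex with cells ordered by f-value, and let a ≺ y with a the last facet of y in this ordering. If, when the standard left-to-right column reduction of the Z/2 boundary matrix reaches column y, the row of a contains no pivot of a previously reduced column, then the reduced column y has its lowest nonzero entry in row a; hence (a,y) is a birth-death pair. -/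
/-- Row `i` holds the lowest nonzero entry of column `j` of `R`. -/
def IsLow {n : ℕ} (R : Matrix (Fin n) (Fin n) (ZMod 2)) (i j : Fin n) : Prop :=
  R i j ≠ 0 ∧ ∀ i', R i' j ≠ 0 → i' ≤ i

/-- `R` is a reduction of `Δ`: `R = Δ·V` with `V` upper triangular with unit
diagonal, and the lowest nonzero entries of the nonzero columns of `R` lie in
pairwise distinct rows. -/
def IsReduction {n : ℕ} (Δ R : Matrix (Fin n) (Fin n) (ZMod 2)) : Prop :=
  ∃ V : Matrix (Fin n) (Fin n) (ZMod 2),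
    (∀ i j, j < i → V i j = 0) ∧ (∀ i, V i i = 1) ∧ R = Δ * V ∧
    ∀ i j j', IsLow R i j → IsLow R i j' → j = j'

/-- If `a` (row `i`) is the last facet of `y` (column `j`), and row `i` holds no
pivot of a column to the left of `j`, then in any reduction the reduced column
`j` has its lowest nonzero entry in row `i`; hence `(c_i, c_j)` is a
birth-death pair. -/
theorem stmt3 {n : ℕ} (Δ R : Matrix (Fin n) (Fin n) (ZMod 2))
    (hR : IsReduction Δ R) (i j : Fin n)
    (hfacet : Δ i j ≠ 0) (hlast : ∀ i', i < i' → Δ i' j = 0)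
    (hnopivot : ∀ j', j' < j → ¬ IsLow R i j') :
    IsLow R i j := by
  classical
  obtain ⟨V, hVlt, hVdiag, hRV, hlow⟩ := hR
  have two : ∀ x : ZMod 2, x ≠ 0 → x = 1 := by decide
  -- V is invertible
  have hdet : V.det = 1 := by
    rw [Matrix.det_of_upperTriangular (fun i j hij => hVlt i j hij)]
    simp [hVdiag]
  have hdetu : IsUnit V.det := by rw [hdet]; exact isUnit_one
  haveI := V.invertibleOfIsUnitDet hdetu
  set W := V⁻¹ with hWdef
  have hBT : Matrix.BlockTriangular W id :=
    Matrix.blockTriangular_inv_of_blockTriangular (fun i j h => hVlt i j h)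
  have hWlt : ∀ k, j < k → W k j = 0 := fun k hk => hBT hk
  have hVW : V * W = 1 := Matrix.mul_nonsing_inv V hdetu
  have hΔ : Δ = R * W := by
    rw [hRV, Matrix.mul_assoc, hVW, Matrix.mul_one]
  -- the relevant set of columns
  set S : Finset (Fin n) :=
    Finset.univ.filter (fun k => W k j ≠ 0 ∧ ∃ m, R m k ≠ 0) with hSdef
  have hsum : ∀ m, Δ m j = ∑ k ∈ S, R m k := by
    intro m
    have h1 : ∀ k ∈ S, R m k * W k j = R m k := by
      intro k hk
      rw [hSdef, Finset.mem_filter] at hk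
      rw [two _ hk.2.1, mul_one]
    calc Δ m j = ∑ k, R m k * W k j := by rw [hΔ, Matrix.mul_apply]
      _ = ∑ k ∈ S, R m k * W k j := by
          refine (Finset.sum_subset (Finset.subset_univ S) ?_).symm
          intro k _ hk
          rw [hSdef, Finset.mem_filter] at hk
          push_neg at hk
          by_cases hw : W k j = 0
          · rw [hw, mul_zero]
          · rw [hk (Finset.mem_univ k) hw m, zero_mul]
      _ = ∑ k ∈ S, R m k := Finset.sum_congr rfl h1
  -- each column in S has a lowest nonzero entry
  have hex : ∀ k ∈ S, ∃ m, IsLow R m k := by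
    intro k hk
    rw [hSdef, Finset.mem_filter] at hk
    obtain ⟨m0, hm0⟩ := hk.2.2
    have hne : (Finset.univ.filter (fun m => R m k ≠ 0)).Nonempty :=
      ⟨m0, by simp [hm0]⟩
    refine ⟨(Finset.univ.filter fun m => R m k ≠ 0).max' hne, ?_, ?_⟩
    · have := Finset.max'_mem _ hne
      simpa using this
    · intro i' hi'
      exact Finset.le_max' _ i' (by simp [hi'])
  let ℓ : Fin n → Fin n := fun k => if h : ∃ m, IsLow R m k then h.choose else i
  have hℓ : ∀ k ∈ S, IsLow R (ℓ k) k := by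
    intro k hk
    have h := hex k hk
    simp only [ℓ, dif_pos h]
    exact h.choose_spec
  have hSne : S.Nonempty := by
    by_contra h
    rw [Finset.not_nonempty_iff_eq_empty] at h
    exact hfacet (by rw [hsum i, h, Finset.sum_empty])
  obtain ⟨k0, hk0S, hk0max⟩ := Finset.exists_max_image S ℓ hSne
  -- the row of the maximal low of columns in S carries a nonzero entry of Δ_j
  have hsingle : ∀ k ∈ S, k ≠ k0 → R (ℓ k0) k = 0 := by
    intro k hk hne
    by_contra hR0
    have h1 : ℓ k0 ≤ ℓ k := (hℓ k hk).2 _ hR0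
    have h2 : ℓ k = ℓ k0 := le_antisymm (hk0max k hk) h1
    have h3 : IsLow R (ℓ k0) k := h2 ▸ (hℓ k hk)
    exact hne (hlow (ℓ k0) k k0 h3 (hℓ k0 hk0S))
  have hmaxentry : Δ (ℓ k0) j ≠ 0 := by
    rw [hsum (ℓ k0), Finset.sum_eq_single_of_mem k0 hk0S hsingle]
    exact (hℓ k0 hk0S).1
  have hle : ℓ k0 ≤ i := by
    by_contra h
    push_neg at h
    exact hmaxentry (hlast _ h)
  -- some column in S is nonzero in row i
  have hfin : ∃ k ∈ S, R i k ≠ 0 := by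
    by_contra h
    push_neg at h
    exact hfacet (by rw [hsum i]; exact Finset.sum_eq_zero h)
  obtain ⟨k, hkS, hRik⟩ := hfin
  have h4 : i ≤ ℓ k := (hℓ k hkS).2 i hRik
  have h5 : ℓ k = i := le_antisymm (le_trans (hk0max k hkS) hle) h4
  have h6 : IsLow R i k := h5 ▸ (hℓ k hkS)
  have hkj : k ≤ j := by
    by_contra h
    push_neg at h
    have : W k j ≠ 0 := by
      rw [hSdef, Finset.mem_filter] at hkS
      exact hkS.2.1
    exact this (hWlt k h)
  rcases lt_or_eq_of_le hkj with h | h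
  · exact absurd h6 (hnopivot k h)
  · exact h ▸ h6
end

section
/- In the standard column reduction of a boundary matrix over Z/2, the set of pivot positions (pairs (i,j) where row i holds the lowest nonzero entry of reduced column j) is independent of the order in which admissible column additions are performed: any reduction obtained by repeatedly adding an earlier column to a later column so that in the end the lowest nonzero entries of the nonzero columns lie in pairwise distinct rows yields the same pivot set. -/
namespace Stmt4Aux

variable {n : ℕ}

/-- The set of (row-vector-valued) column combinations of the first `j` columns. -/
def colSpan (M : Matrix (Fin n) (Fin n) (ZMod 2)) (j : Fin n) : Set (Fin n → ZMod 2) :=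
  {v | ∃ c : Fin n → ZMod 2, ∀ i, v i = ∑ k ∈ Finset.Iic j, c k * M i k}

lemma colSpan_subset {A B U : Matrix (Fin n) (Fin n) (ZMod 2)}
    (hU : ∀ i j, j < i → U i j = 0) (hAB : A = B * U) (j : Fin n) :
    colSpan A j ⊆ colSpan B j := by
  rintro v ⟨c, hc⟩
  refine ⟨fun l => ∑ k ∈ Finset.Iic j, c k * U l k, fun i => ?_⟩
  rw [hc i]
  subst hAB
  simp only [Matrix.mul_apply]
  calc ∑ k ∈ Finset.Iic j, c k * ∑ l, B i l * U l k
      = ∑ l, ∑ k ∈ Finset.Iic j, c k * U l k * B i l := by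
        rw [Finset.sum_comm]
        congr 1; ext k
        rw [Finset.mul_sum]
        congr 1; ext l; ring
    _ = ∑ l ∈ Finset.Iic j, ∑ k ∈ Finset.Iic j, c k * U l k * B i l := by
        refine (Finset.sum_subset (Finset.subset_univ _) ?_).symm
        intro l _ hl
        refine Finset.sum_eq_zero fun k hk => ?_
        rw [hU l k (lt_of_le_of_lt (Finset.mem_Iic.mp hk)
          (lt_of_not_ge (fun h => hl (Finset.mem_Iic.mpr h))))]
        ring
    _ = ∑ l ∈ Finset.Iic j, (∑ k ∈ Finset.Iic j, c k * U l k) * B i l := by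
        congr 1; ext l; rw [Finset.sum_mul]

lemma col_mem_colSpan (M : Matrix (Fin n) (Fin n) (ZMod 2)) {k j : Fin n} (hk : k ≤ j) :
    (fun i => M i k) ∈ colSpan M j := by
  refine ⟨fun l => if l = k then 1 else 0, fun i => ?_⟩
  rw [Finset.sum_eq_single k]
  · simp
  · intro b _ hb; simp [hb]
  · intro h; exact absurd (Finset.mem_Iic.mpr hk) h

/-- Characterization of lows of elements of the column span of a reduced matrix. -/
lemma low_of_span {R : Matrix (Fin n) (Fin n) (ZMod 2)}
    (hred : ∀ i j j', IsLow R i j → IsLow R i j' → j = j')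
    {j i : Fin n} {v : Fin n → ZMod 2} (hv : v ∈ colSpan R j)
    (h0 : v i ≠ 0) (hlow : ∀ i', v i' ≠ 0 → i' ≤ i) :
    ∃ k, k ≤ j ∧ IsLow R i k := by
  obtain ⟨c, hc⟩ := hv
  -- restrict to nonzero terms
  set T : Finset (Fin n) :=
    (Finset.Iic j).filter (fun k => c k ≠ 0 ∧ ∃ i', R i' k ≠ 0) with hT
  have hsum : ∀ i', v i' = ∑ k ∈ T, c k * R i' k := by
    intro i'
    rw [hc i', eq_comm]
    apply Finset.sum_subset (Finset.filter_subset _ _)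
    intro k hk hk'
    rw [Finset.mem_filter] at hk'
    push_neg at hk'
    by_cases hck : c k = 0
    · rw [hck]; ring
    · rw [(hk' hk hck) i']; ring
  -- the low map
  have hflow : ∀ k ∈ T, ∃ l, IsLow R l k := by
    intro k hk
    have hk2 := hk
    rw [hT, Finset.mem_filter] at hk2
    obtain ⟨_, _, i', hi'⟩ := hk2
    have hne : ((Finset.univ.filter fun l => R l k ≠ 0)).Nonempty :=
      ⟨i', by simp [hi']⟩
    refine ⟨Finset.max' _ hne, ?_, ?_⟩
    · have := Finset.max'_mem _ hne
      simpa using this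
    · intro l hl
      exact Finset.le_max' _ l (by simp [hl])
  classical
  let f : Fin n → Fin n := fun k => if h : ∃ l, IsLow R l k then h.choose else i
  have hf : ∀ k ∈ T, IsLow R (f k) k := by
    intro k hk
    have h := hflow k hk
    simp only [f, dif_pos h]
    exact h.choose_spec
  have hTne : T.Nonempty := by
    by_contra hTe
    rw [Finset.not_nonempty_iff_eq_empty] at hTe
    rw [hsum i, hTe, Finset.sum_empty] at h0
    exact h0 rfl
  have hIne : (T.image f).Nonempty := hTne.image f
  set i₀ := (T.image f).max' hIne with hi₀
  obtain ⟨k₀, hk₀T, hk₀⟩ := Finset.mem_image.mp (Finset.max'_mem _ hIne)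
  -- v i₀ = c k₀ * R i₀ k₀ ≠ 0
  have hlowk₀ : IsLow R i₀ k₀ := by
    rw [hi₀, ← hk₀]; exact hf k₀ hk₀T
  have hvi₀ : v i₀ = c k₀ * R i₀ k₀ := by
    rw [hsum i₀]
    apply Finset.sum_eq_single_of_mem k₀ hk₀T
    intro k hkT hkne
    by_cases hRk : R i₀ k = 0
    · rw [hRk]; ring
    · exfalso
      have hle : i₀ ≤ f k := (hf k hkT).2 i₀ hRk
      have hge : f k ≤ i₀ := Finset.le_max' _ _ (Finset.mem_image_of_mem f hkT)
      have : f k = i₀ := le_antisymm hge hle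
      exact hkne (hred i₀ k k₀ (this ▸ hf k hkT) hlowk₀)
  have hck₀ : c k₀ ≠ 0 := by
    have := hk₀T; rw [hT, Finset.mem_filter] at this; exact this.2.1
  have hvne : v i₀ ≠ 0 := by
    rw [hvi₀]; exact mul_ne_zero hck₀ hlowk₀.1
  -- i₀ = i
  have h1 : i₀ ≤ i := hlow i₀ hvne
  have h2 : i ≤ i₀ := by
    rw [hsum i] at h0
    obtain ⟨k, hkT, hk⟩ := Finset.exists_ne_zero_of_sum_ne_zero h0
    have hRik : R i k ≠ 0 := fun h => hk (by rw [h]; ring)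
    calc i ≤ f k := (hf k hkT).2 i hRik
      _ ≤ i₀ := Finset.le_max' _ _ (Finset.mem_image_of_mem f hkT)
  have : i = i₀ := le_antisymm h2 h1
  exact ⟨k₀, Finset.mem_Iic.mp (Finset.mem_filter.mp hk₀T).1, this ▸ hlowk₀⟩

/-- A reduction has the same column spans as Δ. -/
lemma colSpan_eq {Δ R : Matrix (Fin n) (Fin n) (ZMod 2)}
    {V : Matrix (Fin n) (Fin n) (ZMod 2)}
    (hVtri : ∀ i j, j < i → V i j = 0) (hVdiag : ∀ i, V i i = 1)
    (hRV : R = Δ * V) (j : Fin n) : colSpan R j = colSpan Δ j := by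
  have hbt : V.BlockTriangular id := fun i k h => hVtri i k h
  have hdet : IsUnit V.det := by
    rw [Matrix.det_of_upperTriangular hbt]
    simp [hVdiag]
  haveI : Invertible V := V.invertibleOfIsUnitDet hdet
  have hinv : V⁻¹.BlockTriangular id :=
    Matrix.blockTriangular_inv_of_blockTriangular hbt
  have hΔ : Δ = R * V⁻¹ := by
    rw [hRV, Matrix.mul_inv_cancel_right_of_invertible]
  apply le_antisymm
  · exact colSpan_subset hVtri hRV j
  · exact colSpan_subset (fun i k h => hinv (by exact h)) hΔ j

/-- Key invariance: `∃ k ≤ j, IsLow R i k` depends only on Δ. -/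
lemma low_le_iff {Δ R : Matrix (Fin n) (Fin n) (ZMod 2)}
    (h : IsReduction Δ R) (i j : Fin n) :
    (∃ k, k ≤ j ∧ IsLow R i k) ↔ ∃ v ∈ colSpan Δ j, v i ≠ 0 ∧ ∀ i', v i' ≠ 0 → i' ≤ i := by
  obtain ⟨V, hVtri, hVdiag, hRV, hred⟩ := h
  have hspan := colSpan_eq hVtri hVdiag hRV j
  constructor
  · rintro ⟨k, hkj, hlow⟩
    exact ⟨fun i' => R i' k, hspan ▸ col_mem_colSpan R hkj, hlow.1, hlow.2⟩
  · rintro ⟨v, hv, h0, hlow⟩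
    exact low_of_span hred (hspan ▸ hv) h0 hlow

theorem main {Δ R₁ R₂ : Matrix (Fin n) (Fin n) (ZMod 2)}
    (h₁ : IsReduction Δ R₁) (h₂ : IsReduction Δ R₂) {i j : Fin n}
    (hl : IsLow R₁ i j) : IsLow R₂ i j := by
  obtain ⟨k, hkj, hlowk⟩ := (low_le_iff h₂ i j).mpr
    ((low_le_iff h₁ i j).mp ⟨j, le_refl j, hl⟩)
  rcases eq_or_lt_of_le hkj with heq | hlt
  · exact heq ▸ hlowk
  · exfalso
    obtain ⟨k', hk'k, hlowk'⟩ := (low_le_iff h₁ i k).mpr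
      ((low_le_iff h₂ i k).mp ⟨k, le_refl k, hlowk⟩)
    obtain ⟨_, _, _, _, hred₁⟩ := h₁
    have heq : k' = j := hred₁ i k' j hlowk' hl
    rw [heq] at hk'k
    exact absurd (lt_of_le_of_lt hk'k hlt) (lt_irrefl j)

end Stmt4Aux

/-- The pivot set of a reduction of an ordered boundary matrix over `Z/2` is
independent of the order of the admissible column additions: any two
reductions have the same pivot set. -/
theorem stmt4 {n : ℕ} (Δ R₁ R₂ : Matrix (Fin n) (Fin n) (ZMod 2))
    (h₁ : IsReduction Δ R₁) (h₂ : IsReduction Δ R₂) :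
    ∀ i j, IsLow R₁ i j ↔ IsLow R₂ i j := by
  exact fun i j => ⟨Stmt4Aux.main h₁ h₂, Stmt4Aux.main h₂ h₁⟩
end

section
/- Let Δ be an ordered boundary matrix over Z/2 and R = ΔV a reduction (V upper triangular with unit diagonal, lowest nonzero entries of nonzero columns in distinct rows). Then the pivot (i,j) belongs to the pivot set of R if and only if rank(Δ_i^j) − rank(Δ_{i+1}^j) − rank(Δ_i^{j-1}) + rank(Δ_{i+1}^{j-1}) = 1, where Δ_i^j denotes the lower-left submatrix consisting of rows i through n and columns 1 through j. In particular, the pivot set is the same for all reductions. -/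
/-- Rank of the lower-left submatrix of `Δ` consisting of the rows with
(0-based) index `≥ i` and the columns with index `< j`. -/
noncomputable def lowRank {n : ℕ} (Δ : Matrix (Fin n) (Fin n) (ZMod 2))
    (i j : ℕ) : ℕ :=
  Matrix.rank (Matrix.of fun (r : {r : Fin n // i ≤ (r : ℕ)})
    (c : {c : Fin n // (c : ℕ) < j}) => Δ r.1 c.1)

open Finset Matrix

theorem linearIndependent_of_injective_of_eq_zero_of_lt {R ι κ : Type*} [Ring R]
    [NoZeroDivisors R] [LinearOrder κ] {b : ι → κ → R} {f : ι → κ} (hf : Function.Injective f)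
    (hb : ∀ c, b c (f c) ≠ 0) (hb_lt : ∀ c k, f c < k → b c k = 0) :
    LinearIndependent R b := by
  classical
  rw [linearIndependent_iff']
  intro s g hg
  by_contra! hs
  obtain ⟨cm, hcm, hmax⟩ := exists_max_image {c ∈ s | g c ≠ 0} f
    (by simpa [Finset.Nonempty] using hs)
  rw [mem_filter] at hcm
  have heval := congrFun hg (f cm)
  rw [Finset.sum_apply, sum_eq_single_of_mem cm hcm.1] at heval
  · exact hcm.2 ((mul_eq_zero.1 heval).resolve_right (hb cm))
  intro c hc hne
  by_cases hgc : g c = 0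
  · simp [hgc]
  have hlt : f c < f cm := (hmax c (mem_filter.2 ⟨hc, hgc⟩)).lt_of_ne (hf.ne hne)
  simp [hb_lt c _ hlt]

section

variable {n : ℕ}

open scoped Classical

lemma IsLow.unique {R : Matrix (Fin n) (Fin n) (ZMod 2)} {r r' c : Fin n}
    (h : IsLow R r c) (h' : IsLow R r' c) : r = r' :=
  le_antisymm (h'.2 r h.1) (h.2 r' h'.1)

lemma exists_isLow_of_ne_zero {R : Matrix (Fin n) (Fin n) (ZMod 2)} {r c : Fin n}
    (h : R r c ≠ 0) : ∃ r₀, r ≤ r₀ ∧ IsLow R r₀ c := by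
  obtain ⟨r₀, hr₀, hmax⟩ := exists_max_image {r' | R r' c ≠ 0} id ⟨r, by simpa using h⟩
  exact ⟨r₀, hmax r (by simpa using h), (mem_filter.1 hr₀).2,
    fun r' h' => hmax r' (by simpa using h')⟩

noncomputable def pivotCols (R : Matrix (Fin n) (Fin n) (ZMod 2)) (i j : ℕ) : Finset (Fin n) :=
  {c | (c : ℕ) < j ∧ ∃ r : Fin n, i ≤ (r : ℕ) ∧ IsLow R r c}

@[simp]
lemma mem_pivotCols {R : Matrix (Fin n) (Fin n) (ZMod 2)} {i j : ℕ} {c : Fin n} :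
    c ∈ pivotCols R i j ↔ (c : ℕ) < j ∧ ∃ r : Fin n, i ≤ (r : ℕ) ∧ IsLow R r c := by
  simp [pivotCols]

lemma card_pivotCols_succ (R : Matrix (Fin n) (Fin n) (ZMod 2)) (i : ℕ) (j : Fin n) :
    #(pivotCols R i (j + 1)) =
      #(pivotCols R i j) + if ∃ r : Fin n, i ≤ (r : ℕ) ∧ IsLow R r j then 1 else 0 := by
  split_ifs with h
  · rw [← card_insert_of_notMem (s := pivotCols R i j) (a := j) (by simp)]
    congr 1
    ext c
    simp only [mem_insert, mem_pivotCols, Fin.ext_iff]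
    grind
  · rw [add_zero]
    congr 1
    ext c
    simp only [mem_pivotCols]
    grind

lemma lowRank_eq_card_pivotCols {R : Matrix (Fin n) (Fin n) (ZMod 2)}
    (hR : ∀ r c c', IsLow R r c → IsLow R r c' → c = c') (i j : ℕ) :
    lowRank R i j = #(pivotCols R i j) := by
  let M : Matrix {r : Fin n // i ≤ (r : ℕ)} {c : Fin n // (c : ℕ) < j} (ZMod 2) :=
    of fun r c => R r.1 c.1
  let b : pivotCols R i j → {r : Fin n // i ≤ (r : ℕ)} → ZMod 2 := fun c r => R r.1 c.1
  have hspan :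
      Submodule.span (ZMod 2) (Set.range M.col) = Submodule.span (ZMod 2) (Set.range b) := by
    apply le_antisymm <;> rw [Submodule.span_le] <;> rintro - ⟨c, rfl⟩
    · by_cases hc : c.1 ∈ pivotCols R i j
      · exact Submodule.subset_span ⟨⟨c.1, hc⟩, rfl⟩
      · have hzero : M.col c = 0 := by
          funext r
          by_contra hne
          obtain ⟨r₀, hr₀, hlow⟩ := exists_isLow_of_ne_zero hne
          exact hc (mem_pivotCols.2 ⟨c.2, r₀, r.2.trans hr₀, hlow⟩)
        rw [hzero]
        exact zero_mem _
    · exact Submodule.subset_span ⟨⟨c.1, (mem_pivotCols.1 c.2).1⟩, rfl⟩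
  choose low hlow using fun c : pivotCols R i j => (mem_pivotCols.1 c.2).2
  have hb : LinearIndependent (ZMod 2) b := by
    refine linearIndependent_of_injective_of_eq_zero_of_lt
      (f := fun c => (⟨low c, (hlow c).1⟩ : {r : Fin n // i ≤ (r : ℕ)}))
      (fun c c' h => Subtype.ext (hR _ _ _ (hlow c).2 ?_))
      (fun c => (hlow c).2.1)
      (fun c r hr => by_contra fun h => not_le.2 hr ((hlow c).2.2 r.1 h))
    rw [show low c = low c' from congrArg Subtype.val h]
    exact (hlow c').2
  rw [lowRank, rank_eq_finrank_span_cols, hspan, finrank_span_eq_card hb, Fintype.card_coe]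

lemma lowRank_mul_of_upperTriangular (Δ V : Matrix (Fin n) (Fin n) (ZMod 2))
    (hV : ∀ i j, j < i → V i j = 0) (hVd : ∀ i, V i i = 1) (i j : ℕ) :
    lowRank (Δ * V) i j = lowRank Δ i j := by
  let rows : {r : Fin n // i ≤ (r : ℕ)} → Fin n := Subtype.val
  let cols : {c : Fin n // (c : ℕ) < j} → Fin n := Subtype.val
  have hmul : (Δ * V).submatrix rows cols = Δ.submatrix rows cols * V.submatrix cols cols := by
    ext r c
    simp only [submatrix_apply, mul_apply]
    rw [← Fintype.sum_subtype_add_sum_subtype (fun k : Fin n => (k : ℕ) < j), add_eq_left]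
    exact Fintype.sum_eq_zero _ fun k => by
      rw [hV _ _ (c.2.trans_le (not_lt.1 k.2)), mul_zero]
  have hdet : (V.submatrix cols cols).det = 1 := by
    rw [det_of_isUpperTriangular fun a b (hab : b < a) => hV a.1 b.1 hab]
    simp [hVd]
  change ((Δ * V).submatrix rows cols).rank = (Δ.submatrix rows cols).rank
  rw [hmul, rank_mul_eq_left_of_isUnit_det _ _ (by simp [hdet])]

lemma isLow_iff_exists_isLow_ge {R : Matrix (Fin n) (Fin n) (ZMod 2)} {i j : Fin n} :
    IsLow R i j ↔ (∃ r : Fin n, (i : ℕ) ≤ r ∧ IsLow R r j) ∧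
      ¬ ∃ r : Fin n, (i : ℕ) + 1 ≤ r ∧ IsLow R r j := by
  constructor
  · intro h
    refine ⟨⟨i, le_rfl, h⟩, fun ⟨r, hr, h'⟩ => ?_⟩
    rw [h'.unique h] at hr
    omega
  · rintro ⟨⟨r, hr, h⟩, hne⟩
    have : r = i := Fin.ext (by_contra fun hri => hne ⟨r, by omega, h⟩)
    rwa [this] at h

lemma isLow_iff_alternating_lowRank_eq_one {R : Matrix (Fin n) (Fin n) (ZMod 2)}
    (hR : ∀ r c c', IsLow R r c → IsLow R r c' → c = c') (i j : Fin n) :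
    IsLow R i j ↔
      (lowRank R (i : ℕ) ((j : ℕ) + 1) : ℤ) - lowRank R ((i : ℕ) + 1) ((j : ℕ) + 1)
        - lowRank R (i : ℕ) (j : ℕ) + lowRank R ((i : ℕ) + 1) (j : ℕ) = 1 := by
  have hcancel (a b x y : ℕ) : ((a + x : ℕ) : ℤ) - (b + y : ℕ) - a + b = x - y := by
    push_cast
    ring
  rw [isLow_iff_exists_isLow_ge]
  simp only [lowRank_eq_card_pivotCols hR, card_pivotCols_succ, hcancel]
  split_ifs <;> simp_all

lemma IsReduction.isLow_iff_alternating_lowRank_eq_one {Δ R : Matrix (Fin n) (Fin n) (ZMod 2)}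
    (hR : IsReduction Δ R) (i j : Fin n) :
    IsLow R i j ↔
      (lowRank Δ (i : ℕ) ((j : ℕ) + 1) : ℤ) - lowRank Δ ((i : ℕ) + 1) ((j : ℕ) + 1)
        - lowRank Δ (i : ℕ) (j : ℕ) + lowRank Δ ((i : ℕ) + 1) (j : ℕ) = 1 := by
  obtain ⟨V, hV, hVd, rfl, hlows⟩ := hR
  simp only [_root_.isLow_iff_alternating_lowRank_eq_one hlows,
    lowRank_mul_of_upperTriangular Δ V hV hVd]

end

/-- `(i,j)` is a pivot of a reduction of `Δ` iff the alternating sum of ranks of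
the four lower-left submatrices delimited by row `i` and column `j` equals `1`.
In particular, the pivot set is the same for all reductions. -/
theorem stmt5 {n : ℕ} (Δ R : Matrix (Fin n) (Fin n) (ZMod 2))
    (hR : IsReduction Δ R) (i j : Fin n) :
    (IsLow R i j ↔
      (lowRank Δ (i : ℕ) ((j : ℕ) + 1) : ℤ)
        - lowRank Δ ((i : ℕ) + 1) ((j : ℕ) + 1)
        - lowRank Δ (i : ℕ) (j : ℕ)
        + lowRank Δ ((i : ℕ) + 1) (j : ℕ) = 1) ∧
    (∀ R', IsReduction Δ R' → (IsLow R i j ↔ IsLow R' i j)) :=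
  ⟨hR.isLow_iff_alternating_lowRank_eq_one i j, fun _ hR' =>
    (hR.isLow_iff_alternating_lowRank_eq_one i j).trans
      (hR'.isLow_iff_alternating_lowRank_eq_one i j).symm⟩
end

section
/- If two filters f and g on a finite complex induce the same ordering of the cells, then they have the same birth-death pairs. -/
/-!
Right multiplication by an `f`-upper-triangular matrix with invertible diagonal preserves the
rank of every block of `Δ` whose columns form an initial segment of the `f`-order. In a reduced
matrix, the nonzero columns of a block whose rows form a final segment have distinct pivots
inside the block, so they are linearly independent and the rank of the block counts them.
Comparing the blocks with columns `≤ j` and `< j` shows that, for every reduction of `Δ`,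
whether column `j` has its pivot in a given final segment of rows is determined by `Δ`; and `i`
is the pivot of `j` exactly when that pivot lies in `{a | f i ≤ f a}` but not in
`{a | f i < f a}`. All of this depends on `f` only through the order it induces.
-/

open scoped Classical

/-- The `Z/2` boundary matrix of a facet relation. -/
noncomputable def bdry {C : Type*} (facet : C → C → Prop) :
    Matrix C C (ZMod 2) :=
  Matrix.of fun a b => if facet a b then 1 else 0

/-- Cell `i` holds the `f`-lowest nonzero entry of column `j` of `R`. -/
def IsLowF {C : Type*} (f : C → ℝ) (R : Matrix C C (ZMod 2)) (i j : C) : Prop :=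
  R i j ≠ 0 ∧ ∀ i', R i' j ≠ 0 → f i' ≤ f i

/-- `R` is a reduction of `Δ` with respect to the ordering of the cells by
`f`-value: `R = Δ·V` with `V` upper triangular with unit diagonal (w.r.t. the
`f`-order) and distinct lowest nonzero rows among the nonzero columns of `R`. -/
def IsReductionF {C : Type*} [Fintype C] (f : C → ℝ)
    (Δ R : Matrix C C (ZMod 2)) : Prop :=
  ∃ V : Matrix C C (ZMod 2),
    (∀ i j, f j < f i → V i j = 0) ∧ (∀ i, V i i = 1) ∧ R = Δ * V ∧
    ∀ i j j', IsLowF f R i j → IsLowF f R i j' → j = j'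

open Finset Matrix

section

variable {C : Type*}

theorem isLowF_iff_of_lt_iff {f g : C → ℝ} (h : ∀ a b, f a < f b ↔ g a < g b)
    {R : Matrix C C (ZMod 2)} {i j : C} : IsLowF f R i j ↔ IsLowF g R i j := by
  have hle : ∀ a b, f a ≤ f b ↔ g a ≤ g b := fun a b => by rw [← not_lt, ← not_lt, h]
  simp only [IsLowF, hle]

theorem IsReductionF.of_lt_iff [Fintype C] {f g : C → ℝ} (h : ∀ a b, f a < f b ↔ g a < g b)
    {Δ R : Matrix C C (ZMod 2)} (hR : IsReductionF g Δ R) : IsReductionF f Δ R := by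
  obtain ⟨V, hV, hdiag, rfl, hred⟩ := hR
  refine ⟨V, fun i j hji => hV i j ((h j i).1 hji), hdiag, rfl, fun i j j' hj hj' => ?_⟩
  exact hred i j j' (isLowF_iff_of_lt_iff h |>.1 hj) (isLowF_iff_of_lt_iff h |>.1 hj')

theorem IsLowF.unique {f : C → ℝ} (hf : Function.Injective f) {R : Matrix C C (ZMod 2)}
    {i i' j : C} (h : IsLowF f R i j) (h' : IsLowF f R i' j) : i = i' :=
  hf (le_antisymm (h'.2 i h.1) (h.2 i' h'.1))

theorem exists_isLowF_of_ne_zero [Fintype C] {f : C → ℝ} {R : Matrix C C (ZMod 2)} {i j : C}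
    (h : R i j ≠ 0) : ∃ i₀, IsLowF f R i₀ j := by
  obtain ⟨i₀, hi₀, hmax⟩ :=
    ({a | R a j ≠ 0} : Finset C).exists_max_image f ⟨i, by simpa using h⟩
  exact ⟨i₀, by simpa using hi₀, fun a ha => hmax a (by simpa using ha)⟩

def HasPivotIn (f : C → ℝ) (R : Matrix C C (ZMod 2)) (P : C → Prop) (j : C) : Prop :=
  ∃ i, P i ∧ IsLowF f R i j

theorem isLowF_iff_hasPivotIn {f : C → ℝ} (hf : Function.Injective f)
    {R : Matrix C C (ZMod 2)} {i j : C} :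
    IsLowF f R i j ↔ HasPivotIn f R (f i ≤ f ·) j ∧ ¬HasPivotIn f R (f i < f ·) j := by
  constructor
  · intro h
    refine ⟨⟨i, le_rfl, h⟩, ?_⟩
    rintro ⟨a, hia, ha⟩
    exact hia.ne (congrArg f (h.unique hf ha))
  · rintro ⟨⟨a, hia, ha⟩, hnot⟩
    obtain hlt | heq := hia.lt_or_eq
    · exact absurd ⟨a, hlt, ha⟩ hnot
    · rwa [hf heq]

theorem card_filter_le_eq_card_filter_lt_add [Fintype C] {α : Type*} [LinearOrder α]
    {f : C → α} (hf : Function.Injective f) (p : C → Prop) (j : C) :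
    #{b | f b ≤ f j ∧ p b} = #{b | f b < f j ∧ p b} + if p j then 1 else 0 := by
  have hle : ∀ b, f b ≤ f j ↔ f b < f j ∨ b = j := fun b => by
    rw [le_iff_lt_or_eq, hf.eq_iff]
  by_cases hj : p j
  · have hinsert : filter (fun b => f b ≤ f j ∧ p b) univ =
        insert j (filter (fun b => f b < f j ∧ p b) univ) := by
      ext b
      by_cases hb : b = j
      · simp [hb, hj]
      · simp [hle, hb]
    rw [hinsert, card_insert_of_notMem (by simp), if_pos hj]
  · rw [if_neg hj, add_zero]
    congr 1
    ext b
    by_cases hb : b = j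
    · simp [hb, hj]
    · simp [hle, hb]

theorem linearIndependent_of_injective_pivot {ι σ K α : Type*} [Ring K] [NoZeroDivisors K]
    [LinearOrder α] {v : ι → σ → K} {p : ι → σ} {f : σ → α}
    (hp : Function.Injective (f ∘ p)) (hpivot : ∀ z, v z (p z) ≠ 0)
    (hlow : ∀ z s, v z s ≠ 0 → f s ≤ f (p z)) : LinearIndependent K v := by
  rw [linearIndependent_iff']
  intro s c hsum
  by_contra! hc
  obtain ⟨z₀, hz₀, hmax⟩ := ({z ∈ s | c z ≠ 0} : Finset ι).exists_max_image (f ∘ p)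
    (by simpa only [filter_nonempty_iff] using hc)
  rw [mem_filter] at hz₀
  have hsingle : ∀ z ∈ s, z ≠ z₀ → c z * v z (p z₀) = 0 := by
    intro z hz hne
    by_cases hcz : c z = 0
    · rw [hcz, zero_mul]
    have hzz₀ : f (p z) ≤ f (p z₀) := hmax z (mem_filter.2 ⟨hz, hcz⟩)
    refine mul_eq_zero_of_right _ (by_contra fun hv => hne (hp ?_))
    exact le_antisymm hzz₀ (hlow z _ hv)
  have hval := congrFun hsum (p z₀)
  simp only [Finset.sum_apply, Pi.smul_apply, smul_eq_mul, Pi.zero_apply] at hval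
  rw [sum_eq_single_of_mem z₀ hz₀.1 hsingle] at hval
  exact hz₀.2 ((mul_eq_zero.1 hval).resolve_right (hpivot z₀))

theorem Matrix.rank_eq_card_of_linearIndependent_cols {m n K : Type*} [Fintype n] [Field K]
    {M : Matrix m n K} (s : Finset n) (hzero : ∀ b ∉ s, M.col b = 0)
    (hli : LinearIndependent K fun b : s => M.col b) : M.rank = #s := by
  have hspan : Submodule.span K (Set.range M.col) =
      Submodule.span K (Set.range fun b : s => M.col b) := by
    refine le_antisymm (Submodule.span_le.2 ?_) (Submodule.span_mono ?_)
    · rintro _ ⟨b, rfl⟩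
      by_cases hb : b ∈ s
      · exact Submodule.subset_span ⟨⟨b, hb⟩, rfl⟩
      · rw [hzero b hb]
        exact zero_mem _
    · rintro _ ⟨b, rfl⟩
      exact ⟨b, rfl⟩
  rw [rank_eq_finrank_span_cols, hspan, finrank_span_eq_card hli, Fintype.card_coe]

theorem Matrix.rank_submatrix_mul_of_blockTriangular {m m' K α : Type*} [Fintype C]
    [CommRing K] [LinearOrder α] {f : C → α} (hf : Function.Injective f) {Δ : Matrix m C K}
    {V : Matrix C C K} (hV : V.BlockTriangular f) (hdiag : ∀ i, IsUnit (V i i)) (r : m' → m)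
    (Q : C → Prop) (hQ : ∀ b b', Q b → f b' ≤ f b → Q b') :
    ((Δ * V).submatrix r (Subtype.val : {b // Q b} → C)).rank =
      (Δ.submatrix r (Subtype.val : {b // Q b} → C)).rank := by
  have hmul : (Δ * V).submatrix r (Subtype.val : {b // Q b} → C) =
      Δ.submatrix r (Subtype.val : {b // Q b} → C) *
        V.submatrix (Subtype.val : {b // Q b} → C) Subtype.val := by
    ext a b
    have hout : ∑ c : {c // ¬Q c}, Δ (r a) c * V c b = 0 :=
      Finset.sum_eq_zero fun c _ => by
        rw [hV (lt_of_not_ge fun hcb => c.2 (hQ b c b.2 hcb)), mul_zero]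
    rw [submatrix_apply, mul_apply, ← Fintype.sum_subtype_add_sum_subtype Q, hout, add_zero]
    rfl
  let _ : LinearOrder {b // Q b} := LinearOrder.lift' (f ·) fun _ _ h => Subtype.ext (hf h)
  have htri : (V.submatrix (Subtype.val : {b // Q b} → C) Subtype.val).IsUpperTriangular :=
    hV.submatrix
  rw [hmul, rank_mul_eq_left_of_isUnit_det _ _ (by
    rw [det_of_isUpperTriangular htri]
    exact IsUnit.prod_iff.2 fun i _ => hdiag i)]

theorem rank_submatrix_eq_card_hasPivotIn [Fintype C] {f : C → ℝ} (hf : Function.Injective f)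
    {R : Matrix C C (ZMod 2)} (hred : ∀ i j j', IsLowF f R i j → IsLowF f R i j' → j = j')
    (P Q : C → Prop) (hP : ∀ a a', P a → f a ≤ f a' → P a') :
    (R.submatrix (Subtype.val : {a // P a} → C) (Subtype.val : {b // Q b} → C)).rank =
      #{b | Q b ∧ HasPivotIn f R P b} := by
  set s : Finset {b // Q b} := {b | HasPivotIn f R P b}
  have hcard : #s = #{b | Q b ∧ HasPivotIn f R P b} := by
    rw [← card_map (Function.Embedding.subtype Q)]
    congr 1
    ext b
    simp [s, and_comm]
  rw [← hcard]
  refine rank_eq_card_of_linearIndependent_cols s ?_ ?_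
  · intro b hb
    funext a
    by_contra h
    obtain ⟨i, hi⟩ := exists_isLowF_of_ne_zero (f := f) h
    exact hb (mem_filter.2 ⟨mem_univ _, i, hP a i a.2 (hi.2 a h), hi⟩)
  · have hpivot : ∀ b : s, HasPivotIn f R P b.1.1 := fun b => (mem_filter.1 b.2).2
    choose p hpP hp using hpivot
    refine linearIndependent_of_injective_pivot (p := fun b => (⟨p b, hpP b⟩ : {a // P a}))
      (f := fun a => f a.1) (fun b b' hbb' => ?_) (fun b => (hp b).1) (fun b a => (hp b).2 a)
    have hpp : p b = p b' := hf hbb'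
    exact Subtype.ext (Subtype.ext (hred _ _ _ (hp b) (hpp ▸ hp b')))

namespace IsReductionF

variable [Fintype C] {f : C → ℝ} {Δ R R' : Matrix C C (ZMod 2)}

theorem card_hasPivotIn_eq_rank (hf : Function.Injective f) (hR : IsReductionF f Δ R)
    (P Q : C → Prop) (hP : ∀ a a', P a → f a ≤ f a' → P a')
    (hQ : ∀ b b', Q b → f b' ≤ f b → Q b') :
    #{b | Q b ∧ HasPivotIn f R P b} =
      (Δ.submatrix (Subtype.val : {a // P a} → C) (Subtype.val : {b // Q b} → C)).rank := by
  obtain ⟨V, hV, hdiag, rfl, hred⟩ := hR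
  rw [← rank_submatrix_eq_card_hasPivotIn hf hred P Q hP]
  exact rank_submatrix_mul_of_blockTriangular hf (fun i j hji => hV i j hji)
    (fun i => hdiag i ▸ isUnit_one) _ Q hQ

theorem hasPivotIn_iff (hf : Function.Injective f) (hR : IsReductionF f Δ R)
    (hR' : IsReductionF f Δ R') (P : C → Prop) (hP : ∀ a a', P a → f a ≤ f a' → P a')
    (j : C) : HasPivotIn f R P j ↔ HasPivotIn f R' P j := by
  have hcard : ∀ Q : C → Prop, (∀ b b', Q b → f b' ≤ f b → Q b') →
      #{b | Q b ∧ HasPivotIn f R P b} = #{b | Q b ∧ HasPivotIn f R' P b} := fun Q hQ => by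
    rw [hR.card_hasPivotIn_eq_rank hf P Q hP hQ, hR'.card_hasPivotIn_eq_rank hf P Q hP hQ]
  have hle := hcard (f · ≤ f j) fun _ _ hb hb' => hb'.trans hb
  have hlt := hcard (f · < f j) fun _ _ hb hb' => hb'.trans_lt hb
  rw [card_filter_le_eq_card_filter_lt_add hf, card_filter_le_eq_card_filter_lt_add hf, hlt]
    at hle
  have hind := Nat.add_left_cancel hle
  by_cases h : HasPivotIn f R P j <;> by_cases h' : HasPivotIn f R' P j <;> simp [h, h'] at hind ⊢

theorem isLowF_iff (hf : Function.Injective f) (hR : IsReductionF f Δ R)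
    (hR' : IsReductionF f Δ R') (i j : C) : IsLowF f R i j ↔ IsLowF f R' i j := by
  rw [isLowF_iff_hasPivotIn hf, isLowF_iff_hasPivotIn hf,
    hR.hasPivotIn_iff hf hR' _ (fun _ _ ha haa' => ha.trans haa'),
    hR.hasPivotIn_iff hf hR' _ (fun _ _ ha haa' => ha.trans_le haa')]

end IsReductionF

end

theorem stmt6_general {C : Type*} [Fintype C] (facet : C → C → Prop) (f g : C → ℝ)
    (hfinj : Function.Injective f)
    (horder : ∀ a b, f a < f b ↔ g a < g b)
    (Rf Rg : Matrix C C (ZMod 2))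
    (hRf : IsReductionF f (bdry facet) Rf)
    (hRg : IsReductionF g (bdry facet) Rg) :
    ∀ a b, IsLowF f Rf a b ↔ IsLowF g Rg a b := fun a b =>
  (hRf.isLowF_iff hfinj (hRg.of_lt_iff horder) a b).trans (isLowF_iff_of_lt_iff horder)

/-- If two filters on a finite complex induce the same ordering of the cells,
then they have the same birth-death pairs. -/
theorem stmt6 {C : Type*} [Fintype C] (facet : C → C → Prop) (f g : C → ℝ)
    (hfinj : Function.Injective f) (hginj : Function.Injective g)
    (hf : ∀ a b, facet a b → f a < f b) (hg : ∀ a b, facet a b → g a < g b)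
    (horder : ∀ a b, f a < f b ↔ g a < g b)
    (Rf Rg : Matrix C C (ZMod 2))
    (hRf : IsReductionF f (bdry facet) Rf)
    (hRg : IsReductionF g (bdry facet) Rg) :
    ∀ a b, IsLowF f Rf a b ↔ IsLowF g Rg a b :=
  stmt6_general facet f g hfinj horder Rf Rg hRf hRg
end

section
/- Every shallow pair of a filter on a finite complex is a birth-death pair of that filter. -/
open scoped Classical


open scoped Classical

/-- `(a,b)` is a shallow pair: `a` is the `f`-largest facet of `b` and `b` is
the `f`-smallest cofacet of `a`. -/
def ShallowF {C : Type*} (facet : C → C → Prop) (f : C → ℝ) (a b : C) : Prop :=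
  facet a b ∧ (∀ a', facet a' b → f a' ≤ f a) ∧ (∀ b', facet a b' → f b ≤ f b')

/-- Every shallow pair of a filter on a finite complex is a birth-death pair. -/
theorem stmt8 {C : Type*} [Fintype C] (facet : C → C → Prop) (f : C → ℝ)
    (hinj : Function.Injective f)
    (hfil : ∀ a b, facet a b → f a < f b)
    (a b : C) (hshallow : ShallowF facet f a b)
    (R : Matrix C C (ZMod 2)) (hR : IsReductionF f (bdry facet) R) :
    IsLowF f R a b := by
  obtain ⟨V, hVtri, hVdiag, hRV, hlows⟩ := hR
  obtain ⟨hab, hmaxf, hminc⟩ := hshallow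
  -- Step A : R a b = 1
  have hRab : R a b = 1 := by
    rw [hRV, Matrix.mul_apply]
    rw [Finset.sum_eq_single b]
    · simp [bdry, hab, hVdiag b]
    · intro k _ hk
      by_cases hf : facet a k
      · have h1 : f b ≤ f k := hminc k hf
        have h2 : V k b = 0 := hVtri k b (lt_of_le_of_ne h1 (fun h => hk (hinj h.symm)))
        simp [h2]
      · simp [bdry, hf]
    · intro h; exact absurd (Finset.mem_univ b) h
  -- Step B : invertibility of V
  have hbt : V.BlockTriangular f := fun i j h => hVtri i j h
  have hdet : V.det = 1 := by
    rw [hbt.det]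
    apply Finset.prod_eq_one
    intro x hx
    obtain ⟨i, -, hi⟩ := Finset.mem_image.mp hx
    haveI : Unique {j // f j = x} :=
      ⟨⟨⟨i, hi⟩⟩, fun j => Subtype.ext (hinj (j.2.trans hi.symm))⟩
    rw [Matrix.det_unique]
    simp only [Matrix.toSquareBlock_def]
    exact hVdiag _
  haveI : Invertible V := V.invertibleOfIsUnitDet (by rw [hdet]; exact isUnit_one)
  have hWtri : (V⁻¹).BlockTriangular f := Matrix.blockTriangular_inv_of_blockTriangular hbt
  have hΔ : bdry facet = R * V⁻¹ := by
    rw [hRV, Matrix.mul_inv_cancel_right_of_invertible]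
  have hWbb : V⁻¹ b b = 1 := by
    have h1 : (V⁻¹ * V) b b = 1 := by
      rw [Matrix.inv_mul_of_invertible]; simp [Matrix.one_apply]
    rw [Matrix.mul_apply, Finset.sum_eq_single b] at h1
    · rw [hVdiag b, mul_one] at h1; exact h1
    · intro k _ hk
      rcases lt_or_gt_of_ne (fun h : f k = f b => hk (hinj h)) with h | h
      · rw [hWtri h, zero_mul]
      · rw [hVtri k b h, mul_zero]
    · intro h; exact absurd (Finset.mem_univ b) h
  -- Step C : main argument
  refine ⟨by rw [hRab]; exact one_ne_zero, ?_⟩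
  intro i' hi'
  by_contra hcon
  push_neg at hcon
  -- lows exist for nonzero columns
  have hlowex : ∀ m : C, (∃ i, R i m ≠ 0) → ∃ i, IsLowF f R i m := by
    intro m hm
    obtain ⟨i0, hi0⟩ := hm
    have hne : (Finset.univ.filter (fun i => R i m ≠ 0)).Nonempty :=
      ⟨i0, by simp [hi0]⟩
    obtain ⟨i, hi, hmax⟩ := Finset.exists_max_image _ f hne
    refine ⟨i, (Finset.mem_filter.mp hi).2, fun i'' hi'' => hmax i'' (by simp [hi''])⟩
  set ℓ : C → C := fun m => if h : ∃ i, IsLowF f R i m then h.choose else m with hℓdef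
  have hℓ : ∀ m : C, (∃ i, R i m ≠ 0) → IsLowF f R (ℓ m) m := by
    intro m hm
    have h := hlowex m hm
    simp only [hℓdef, dif_pos h]
    exact h.choose_spec
  set S : Finset C := Finset.univ.filter (fun m => V⁻¹ m b ≠ 0 ∧ ∃ i, R i m ≠ 0) with hSdef
  have hbS : b ∈ S := by
    simp only [hSdef, Finset.mem_filter, Finset.mem_univ, true_and]
    exact ⟨by rw [hWbb]; exact one_ne_zero, ⟨i', hi'⟩⟩
  obtain ⟨m', hm'S, hm'max⟩ := Finset.exists_max_image S (fun m => f (ℓ m)) ⟨b, hbS⟩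
  obtain ⟨hm'W, hm'col⟩ := (Finset.mem_filter.mp hm'S).2
  have hℓm' := hℓ m' hm'col
  -- Δ (ℓ m') b ≠ 0
  have hΔne : bdry facet (ℓ m') b ≠ 0 := by
    have : bdry facet (ℓ m') b = R (ℓ m') m' * V⁻¹ m' b := by
      rw [hΔ, Matrix.mul_apply, Finset.sum_eq_single m']
      · intro k _ hk
        by_cases hW : V⁻¹ k b = 0
        · rw [hW, mul_zero]
        · by_cases hcol : ∃ i, R i k ≠ 0
          · have hkS : k ∈ S := by
              simp only [hSdef, Finset.mem_filter, Finset.mem_univ, true_and]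
              exact ⟨hW, hcol⟩
            have hℓk := hℓ k hcol
            have hne : ℓ k ≠ ℓ m' := fun h => hk (hlows (ℓ k) k m' hℓk (h ▸ hℓm'))
            have hlt : f (ℓ k) < f (ℓ m') :=
              lt_of_le_of_ne (hm'max k hkS) (fun h => hne (hinj h))
            have : R (ℓ m') k = 0 := by
              by_contra hcc
              exact absurd (hℓk.2 (ℓ m') hcc) (not_le.mpr hlt)
            rw [this, zero_mul]
          · push_neg at hcol
            rw [hcol (ℓ m'), zero_mul]
      · intro h; exact absurd (Finset.mem_univ m') h
    rw [this]
    exact mul_ne_zero hℓm'.1 hm'W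
  have hfacet : facet (ℓ m') b := by
    by_contra hf
    simp [bdry, hf] at hΔne
  have h1 : f (ℓ m') ≤ f a := hmaxf (ℓ m') hfacet
  have h2 : f i' ≤ f (ℓ b) := (hℓ b ⟨i', hi'⟩).2 i' hi'
  have h3 : f (ℓ b) ≤ f (ℓ m') := hm'max b hbS
  linarith
end

section
/- If a filter on a finite complex has a nonempty facet relation, then it has at least one shallow pair. Consequently, repeatedly canceling shallow pairs empties the facet relation. -/
/-- A combinatorial complex: a finite set of cells together with a facet
relation. -/
structure PreCpx (α : Type*) where
  cells : Finset α
  facet : α → α → Prop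

variable {α : Type*}

/-- `(a,b)` is a shallow pair of the filter `f`: `a` is a facet of `b`, `a` is
the `f`-last facet of `b`, and `b` is the `f`-first cofacet of `a`. -/
def Shallow (K : PreCpx α) (f : α → ℝ) (a b : α) : Prop :=
  K.facet a b ∧ (∀ a', K.facet a' b → f a' ≤ f a) ∧
    (∀ b', K.facet a b' → f b ≤ f b')

/-- Cancellation of the pair `(a,b)`: remove `a` and `b`, and toggle (mod 2)
the facet relation between every other facet of `b` and every other cofacet
of `a`. -/
def cancel [DecidableEq α] (K : PreCpx α) (a b : α) : PreCpx α where
  cells := K.cells \ {a, b}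
  facet := fun x y => x ≠ a ∧ x ≠ b ∧ y ≠ a ∧ y ≠ b ∧
    Xor' (K.facet x y) (K.facet x b ∧ K.facet a y)

/-- `L` is a shallow cancellation order of `(K, f)`: a sequence of pairs, each
shallow at the moment it is canceled, whose cancellation empties the facet
relation. -/
def IsSCO [DecidableEq α] (f : α → ℝ) : PreCpx α → List (α × α) → Prop
  | K, [] => ∀ x y, ¬ K.facet x y
  | K, p :: L => Shallow K f p.1 p.2 ∧ IsSCO f (cancel K p.1 p.2) L

/-- `K` together with `f` forms a filtered complex. -/
def IsFilter (K : PreCpx α) (f : α → ℝ) : Prop :=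
  (∀ x y, K.facet x y → x ∈ K.cells ∧ y ∈ K.cells) ∧
    Set.InjOn f (K.cells : Set α) ∧ (∀ x y, K.facet x y → f x < f y)

open Classical in
lemma exists_shallow' {α : Type*} [Fintype α]
    (K : PreCpx α) (f : α → ℝ) (hK : IsFilter K f)
    (h : ∃ a b, K.facet a b) : ∃ a b, Shallow K f a b := by
  classical
  obtain ⟨hc, _, _⟩ := hK
  set S : Finset α := K.cells.filter (fun b => ∃ a, K.facet a b) with hS
  have hSne : S.Nonempty := by
    obtain ⟨a, b, hab⟩ := h
    exact ⟨b, by simp only [hS, Finset.mem_filter]; exact ⟨(hc a b hab).2, a, hab⟩⟩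
  obtain ⟨b, hbS, hbmin⟩ := S.exists_min_image f hSne
  obtain ⟨hbc, a0, ha0⟩ : b ∈ K.cells ∧ ∃ a, K.facet a b := by
    simpa [hS] using hbS
  set T : Finset α := K.cells.filter (fun a => K.facet a b) with hT
  have hTne : T.Nonempty := ⟨a0, by simp [hT, (hc a0 b ha0).1, ha0]⟩
  obtain ⟨a, haT, hamax⟩ := T.exists_max_image f hTne
  have hab : K.facet a b := (Finset.mem_filter.mp haT).2
  refine ⟨a, b, hab, ?_, ?_⟩
  · intro a' ha'
    exact hamax a' (by simp [hT, (hc a' b ha').1, ha'])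
  · intro b' hb'
    exact hbmin b' (by simp only [hS, Finset.mem_filter]; exact ⟨(hc a b' hb').2, a, hb'⟩)

lemma cancel_isFilter {α : Type*} [DecidableEq α]
    (K : PreCpx α) (f : α → ℝ) (hK : IsFilter K f) {a b : α}
    (hsh : Shallow K f a b) : IsFilter (cancel K a b) f := by
  obtain ⟨hc, hinj, hlt⟩ := hK
  obtain ⟨hab, hla, hfb⟩ := hsh
  have key : ∀ x y, (cancel K a b).facet x y →
      (x ∈ K.cells ∧ y ∈ K.cells) ∧ f x < f y := by
    intro x y ⟨hxa, hxb, hya, hyb, hxor⟩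
    rcases hxor with ⟨hxy, -⟩ | ⟨⟨hxB, hAy⟩, -⟩
    · exact ⟨hc x y hxy, hlt x y hxy⟩
    · refine ⟨⟨(hc x b hxB).1, (hc a y hAy).2⟩, ?_⟩
      calc f x ≤ f a := hla x hxB
        _ < f b := hlt a b hab
        _ ≤ f y := hfb y hAy
  refine ⟨?_, hinj.mono ?_, fun x y hxy => (key x y hxy).2⟩
  · intro x y hxy
    obtain ⟨hxa, hxb, hya, hyb, hx0⟩ := hxy
    obtain ⟨⟨hx, hy⟩, -⟩ := key x y ⟨hxa, hxb, hya, hyb, hx0⟩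
    simp [cancel, hx, hy, hxa, hxb, hya, hyb]
  · intro x hx
    simp only [cancel, Finset.coe_sdiff, Set.mem_diff] at hx
    exact hx.1

lemma sco_exists {α : Type*} [Fintype α] [DecidableEq α] :
    ∀ (n : ℕ) (K : PreCpx α) (f : α → ℝ), IsFilter K f → K.cells.card ≤ n →
      ∃ L : List (α × α), IsSCO f K L := by
  intro n
  induction n with
  | zero =>
    intro K f hK hcard
    refine ⟨[], fun x y hxy => ?_⟩
    have := hK.1 x y hxy
    have : K.cells.Nonempty := ⟨x, this.1⟩
    simp [Finset.card_eq_zero.mp (Nat.le_zero.mp hcard)] at this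
  | succ n ih =>
    intro K f hK hcard
    by_cases h : ∃ a b, K.facet a b
    · obtain ⟨a, b, hsh⟩ := exists_shallow' K f hK h
      have haK : a ∈ K.cells := (hK.1 a b hsh.1).1
      have hcard' : (cancel K a b).cells.card ≤ n := by
        have hss : (cancel K a b).cells ⊂ K.cells := by
          refine Finset.ssubset_iff_of_subset (Finset.sdiff_subset) |>.mpr ?_
          exact ⟨a, haK, by simp [cancel]⟩
        have := Finset.card_lt_card hss
        omega
      obtain ⟨L, hL⟩ := ih (cancel K a b) f (cancel_isFilter K f hK hsh) hcard'
      exact ⟨(a, b) :: L, hsh, hL⟩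
    · exact ⟨[], fun x y hxy => h ⟨x, y, hxy⟩⟩

/-- If the facet relation of a filtered finite complex is nonempty, then there
is at least one shallow pair; consequently, shallow pairs can be repeatedly
canceled until the facet relation runs empty. -/
theorem stmt9 {α : Type*} [Fintype α] [DecidableEq α]
    (K : PreCpx α) (f : α → ℝ) (hK : IsFilter K f) :
    ((∃ a b, K.facet a b) → ∃ a b, Shallow K f a b) ∧
    (∃ L : List (α × α), IsSCO f K L) := by
  exact ⟨exists_shallow' K f hK, sco_exists K.cells.card K f hK le_rfl⟩
end

section
/- Let (x,y) and (a,b) be birth-death pairs of a filter on a finite complex, with dim x = dim a, f(a) < f(x), f(y) < f(b), and a, x consecutive in the filter ordering, and suppose all other birth-death pairs have been canceled so that (x,y) is shallow. If a is a facet of y (in the reduced complex), then after transposing a and x the pairs become (a,y) and (x,b) (the transposition is a BB-type switch); if a is not a facet of y, the pairs (x,y) and (a,b) are unchanged (no switch). -/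
open scoped Classical


open scoped Classical

open Module Submodule Matrix
set_option linter.unusedSectionVars false
set_option maxHeartbeats 1000000

section Aux

variable {C : Type*} [Fintype C] [DecidableEq C]

/-- column `j` of `M` restricted to rows `S`. -/
def colV (M : Matrix C C (ZMod 2)) (S : Finset C) (j : C) : {i // i ∈ S} → ZMod 2 :=
  fun i => M i.1 j

/-- set of columns of `M` over `T`, restricted to rows `S`. -/
def colS (M : Matrix C C (ZMod 2)) (S T : Finset C) : Set ({i // i ∈ S} → ZMod 2) :=
  colV M S '' (T : Set C)

/-- rank of the submatrix of `M` on rows `S` and columns `T`. -/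
noncomputable def rk (M : Matrix C C (ZMod 2)) (S T : Finset C) : ℕ :=
  finrank (ZMod 2) (span (ZMod 2) (colS M S T))

lemma rk_eq_rank (M : Matrix C C (ZMod 2)) (S T : Finset C) :
    rk M S T = (M.submatrix (fun i : {i // i ∈ S} => (i : C))
      (fun j : {j // j ∈ T} => (j : C))).rank := by
  rw [Matrix.rank_eq_finrank_span_cols, rk]
  have : colS M S T = Set.range (M.submatrix (fun i : {i // i ∈ S} => (i : C))
      (fun j : {j // j ∈ T} => (j : C)))ᵀ := by
    rw [colS, Set.image_eq_range]
    rfl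
  rw [this]
  rfl

lemma rk_transpose (M : Matrix C C (ZMod 2)) (S T : Finset C) :
    rk M S T = rk Mᵀ T S := by
  rw [rk_eq_rank, rk_eq_rank, ← Matrix.transpose_submatrix, Matrix.rank_transpose]

lemma colS_insert (M : Matrix C C (ZMod 2)) (S T : Finset C) (j : C) :
    colS M S (insert j T) = insert (colV M S j) (colS M S T) := by
  rw [colS, Finset.coe_insert, Set.image_insert_eq, colS]

lemma rk_mono_cols (M : Matrix C C (ZMod 2)) (S : Finset C) {T T' : Finset C}
    (h : T ⊆ T') : rk M S T ≤ rk M S T' :=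
  Submodule.finrank_mono (span_mono (Set.image_mono (by exact_mod_cast h)))

lemma rk_mono_rows (M : Matrix C C (ZMod 2)) {S S' : Finset C} (T : Finset C)
    (h : S ⊆ S') : rk M S T ≤ rk M S' T := by
  rw [rk_transpose M S T, rk_transpose M S' T]
  exact rk_mono_cols _ _ h

variable {S : Finset C}

lemma finrank_span_insert_le (s : Set ({i // i ∈ S} → ZMod 2)) (v : {i // i ∈ S} → ZMod 2) :
    finrank (ZMod 2) (span (ZMod 2) (insert v s)) ≤
      finrank (ZMod 2) (span (ZMod 2) s) + 1 := by
  rw [Set.insert_eq, span_union]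
  set sv : Set ({i // i ∈ S} → ZMod 2) := {v} with hsv
  have h1 : finrank (ZMod 2) (span (ZMod 2) sv) ≤ 1 := by
    by_cases hv : v = 0
    · subst hv
      rw [hsv, Submodule.span_zero_singleton]
      simp
    · rw [hsv, finrank_span_singleton hv]
  have h2 := Submodule.finrank_sup_add_finrank_inf_eq (span (ZMod 2) sv) (span (ZMod 2) s)
  omega

lemma finrank_span_insert_of_mem {s : Set ({i // i ∈ S} → ZMod 2)} {v : {i // i ∈ S} → ZMod 2}
    (h : v ∈ span (ZMod 2) s) :
    finrank (ZMod 2) (span (ZMod 2) (insert v s)) = finrank (ZMod 2) (span (ZMod 2) s) := by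
  rw [Submodule.span_insert_eq_span h]

lemma finrank_span_insert_of_not_mem {s : Set ({i // i ∈ S} → ZMod 2)} {v : {i // i ∈ S} → ZMod 2}
    (h : v ∉ span (ZMod 2) s) :
    finrank (ZMod 2) (span (ZMod 2) (insert v s)) = finrank (ZMod 2) (span (ZMod 2) s) + 1 := by
  have hlt : span (ZMod 2) s < span (ZMod 2) (insert v s) := by
    refine lt_of_le_of_ne (span_mono (Set.subset_insert _ _)) ?_
    intro he
    exact h (he ▸ subset_span (Set.mem_insert _ _))
  have h1 := Submodule.finrank_lt_finrank_of_lt hlt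
  have h2 := finrank_span_insert_le (S := S) s v
  omega

lemma rk_insert_col_le (M : Matrix C C (ZMod 2)) (T : Finset C) (j : C) :
    rk M S (insert j T) ≤ rk M S T + 1 := by
  rw [rk, colS_insert]
  exact finrank_span_insert_le _ _

lemma rk_insert_col_of_mem (M : Matrix C C (ZMod 2)) {T : Finset C} {j : C}
    (h : colV M S j ∈ span (ZMod 2) (colS M S T)) :
    rk M S (insert j T) = rk M S T := by
  rw [rk, colS_insert, finrank_span_insert_of_mem h]
  rfl

lemma rk_insert_col_of_not_mem (M : Matrix C C (ZMod 2)) {T : Finset C} {j : C}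
    (h : colV M S j ∉ span (ZMod 2) (colS M S T)) :
    rk M S (insert j T) = rk M S T + 1 := by
  rw [rk, colS_insert, finrank_span_insert_of_not_mem h]
  rfl

lemma rk_insert_col_zero (M : Matrix C C (ZMod 2)) {T : Finset C} {j : C}
    (h : ∀ i ∈ S, M i j = 0) :
    rk M S (insert j T) = rk M S T := by
  refine rk_insert_col_of_mem M ?_
  have : colV M S j = 0 := by
    funext i
    exact h i.1 i.2
  rw [this]
  exact zero_mem _

/-- if column `j` has a nonzero entry in a row `i₀` where all columns of `T`
vanish, inserting it increases the rank. -/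
lemma rk_insert_col_pivot (M : Matrix C C (ZMod 2)) {T : Finset C} {j : C}
    {i₀ : C} (hi₀ : i₀ ∈ S) (hnz : M i₀ j ≠ 0) (hz : ∀ j' ∈ T, M i₀ j' = 0) :
    rk M S (insert j T) = rk M S T + 1 := by
  refine rk_insert_col_of_not_mem M ?_
  intro hmem
  have hker : span (ZMod 2) (colS M S T) ≤
      LinearMap.ker (LinearMap.proj (R := ZMod 2) (φ := fun _ : {i // i ∈ S} => ZMod 2) ⟨i₀, hi₀⟩) := by
    rw [span_le]
    rintro v ⟨j', hj', rfl⟩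
    simp only [SetLike.mem_coe, LinearMap.mem_ker, LinearMap.proj_apply]
    exact hz j' hj'
  have := hker hmem
  simp only [LinearMap.mem_ker, LinearMap.proj_apply] at this
  exact hnz this

lemma rk_insert_row_le (M : Matrix C C (ZMod 2)) (S : Finset C) {T : Finset C} (i : C) :
    rk M (insert i S) T ≤ rk M S T + 1 := by
  rw [rk_transpose, rk_transpose M S T]
  exact rk_insert_col_le _ _ _

lemma rk_insert_row_zero (M : Matrix C C (ZMod 2)) {S : Finset C} (T : Finset C) {i : C}
    (h : ∀ j ∈ T, M i j = 0) :
    rk M (insert i S) T = rk M S T := by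
  rw [rk_transpose, rk_transpose M S T]
  exact rk_insert_col_zero _ (by simpa using h)

lemma rk_insert_row_pivot (M : Matrix C C (ZMod 2)) {S : Finset C} (T : Finset C) {i : C}
    {j₀ : C} (hj₀ : j₀ ∈ T) (hnz : M i j₀ ≠ 0) (hz : ∀ i' ∈ S, M i' j₀ = 0) :
    rk M (insert i S) T = rk M S T + 1 := by
  rw [rk_transpose, rk_transpose M S T]
  exact rk_insert_col_pivot _ hj₀ hnz (by simpa using hz)

/-- row membership criterion. -/
lemma rk_insert_row_eq_iff (M : Matrix C C (ZMod 2)) {S : Finset C} (T : Finset C) {i : C} :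
    rk M (insert i S) T = rk M S T ↔
      colV Mᵀ T i ∈ span (ZMod 2) (colS Mᵀ T S) := by
  constructor
  · intro h
    by_contra hmem
    have := rk_insert_col_of_not_mem (S := T) Mᵀ hmem
    rw [← rk_transpose, ← rk_transpose M S T] at this
    omega
  · intro h
    rw [rk_transpose, rk_transpose M S T]
    exact rk_insert_col_of_mem _ h

lemma colV_mul_eq_sum (M V : Matrix C C (ZMod 2)) (T : Finset C) {j : C}
    (hV : ∀ k, k ∉ T → V k j = 0) :
    colV (M * V) S j = ∑ k ∈ T, V k j • colV M S k := by
  funext i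
  simp only [colV, Matrix.mul_apply, Finset.sum_apply, Pi.smul_apply, smul_eq_mul]
  rw [← Finset.sum_subset (Finset.subset_univ T)
    (fun k _ hk => by rw [hV k hk, mul_zero])]
  exact Finset.sum_congr rfl (fun k _ => mul_comm _ _)

lemma span_colS_mul (h : C → ℝ) (hinj : Function.Injective h)
    (M V : Matrix C C (ZMod 2))
    (hV1 : ∀ i j, h j < h i → V i j = 0) (hV2 : ∀ i, V i i = 1)
    {T : Finset C} (hT : ∀ j ∈ T, ∀ k, h k ≤ h j → k ∈ T) :
    span (ZMod 2) (colS (M * V) S T) = span (ZMod 2) (colS M S T) := by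
  have hVsupp : ∀ j ∈ T, ∀ k, k ∉ T → V k j = 0 := by
    intro j hj k hk
    by_contra hne
    exact hk (hT j hj k (le_of_not_gt (fun hlt => hne (hV1 k j hlt))))
  have hsum : ∀ j ∈ T, colV M S j =
      colV (M * V) S j - ∑ k ∈ T.filter (fun k => h k < h j), V k j • colV M S k := by
    intro j hj
    rw [colV_mul_eq_sum M V T (hVsupp j hj)]
    rw [← Finset.sum_erase_add _ _ hj, hV2 j, one_smul]
    have herase : ∑ k ∈ T.erase j, V k j • colV M S k =
        ∑ k ∈ T.filter (fun k => h k < h j), V k j • colV M S k := by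
      refine (Finset.sum_subset ?_ ?_).symm
      · intro k hk
        rw [Finset.mem_filter] at hk
        exact Finset.mem_erase.2 ⟨fun he => absurd (he ▸ hk.2) (lt_irrefl _), hk.1⟩
      · intro k hk hnk
        rw [Finset.mem_erase] at hk
        rw [Finset.mem_filter, not_and] at hnk
        have : V k j = 0 := by
          rcases lt_trichotomy (h k) (h j) with hlt | heq | hgt
          · exact absurd hlt (hnk hk.2)
          · exact absurd (hinj heq) hk.1
          · exact hV1 k j hgt
        rw [this, zero_smul]
    rw [herase]
    abel
  apply le_antisymm
  · rw [span_le]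
    rintro v ⟨j, hj, rfl⟩
    rw [Finset.mem_coe] at hj
    rw [colV_mul_eq_sum M V T (hVsupp j hj)]
    exact sum_mem (fun k hk => smul_mem _ _ (subset_span ⟨k, hk, rfl⟩))
  · rw [span_le]
    rintro v ⟨j, hj, rfl⟩
    rw [Finset.mem_coe] at hj
    have key : ∀ n : ℕ, ∀ j, j ∈ T → (T.filter fun k => h k < h j).card ≤ n →
        colV M S j ∈ span (ZMod 2) (colS (M * V) S T) := by
      intro n
      induction n with
      | zero =>
        intro j hj hcard
        have : T.filter (fun k => h k < h j) = ∅ := Finset.card_eq_zero.1 (le_antisymm hcard (Nat.zero_le _))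
        rw [hsum j hj, this, Finset.sum_empty, sub_zero]
        exact subset_span ⟨j, hj, rfl⟩
      | succ n ih =>
        intro j hj hcard
        rw [hsum j hj]
        refine sub_mem (subset_span ⟨j, hj, rfl⟩) (sum_mem fun k hk => ?_)
        rw [Finset.mem_filter] at hk
        refine smul_mem _ _ (ih k hk.1 ?_)
        have hss : T.filter (fun k' => h k' < h k) ⊂ T.filter (fun k' => h k' < h j) := by
          refine Finset.ssubset_iff_of_subset ?_ |>.2 ⟨k, Finset.mem_filter.2 ⟨hk.1, hk.2⟩, by simp⟩
          intro m hm
          rw [Finset.mem_filter] at hm ⊢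
          exact ⟨hm.1, hm.2.trans hk.2⟩
        have := Finset.card_lt_card hss
        omega
    exact key _ j hj le_rfl

lemma rk_mul (h : C → ℝ) (hinj : Function.Injective h)
    (M V : Matrix C C (ZMod 2))
    (hV1 : ∀ i j, h j < h i → V i j = 0) (hV2 : ∀ i, V i i = 1)
    {T : Finset C} (hT : ∀ j ∈ T, ∀ k, h k ≤ h j → k ∈ T) :
    rk (M * V) S T = rk M S T := by
  rw [rk, rk, span_colS_mul (S := S) h hinj M V hV1 hV2 hT]

/-- rank of a lower-left submatrix of a reduced matrix counts the pivots
in that region. -/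
lemma rk_eq_lowCount (h : C → ℝ) (hinj : Function.Injective h)
    (R : Matrix C C (ZMod 2))
    (hdist : ∀ i j j', IsLowF h R i j → IsLowF h R i j' → j = j')
    {S : Finset C} (hS : ∀ i ∈ S, ∀ i', h i ≤ h i' → i' ∈ S) (T : Finset C) :
    rk R S T = (T.filter fun j => ∃ i ∈ S, IsLowF h R i j).card := by
  classical
  set P := T.filter fun j => ∃ i ∈ S, IsLowF h R i j with hP
  -- columns outside P vanish on rows S
  have hzero : ∀ j ∈ T, j ∉ P → colV R S j = 0 := by
    intro j hj hjP
    funext i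
    by_contra hne
    have hnz : R i.1 j ≠ 0 := hne
    obtain ⟨i', hi'mem, hi'max⟩ := Finset.exists_max_image
      (Finset.univ.filter fun i' => R i' j ≠ 0) h
      ⟨i.1, Finset.mem_filter.2 ⟨Finset.mem_univ _, hnz⟩⟩
    have hlow : IsLowF h R i' j :=
      ⟨(Finset.mem_filter.1 hi'mem).2,
       fun i'' hi'' => hi'max i'' (Finset.mem_filter.2 ⟨Finset.mem_univ _, hi''⟩)⟩
    have hi'S : i' ∈ S := hS i.1 i.2 i' (hi'max i.1 (Finset.mem_filter.2 ⟨Finset.mem_univ _, hnz⟩))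
    exact hjP (Finset.mem_filter.2 ⟨hj, i', hi'S, hlow⟩)
  have hspan : span (ZMod 2) (colS R S T) = span (ZMod 2) (colS R S P) := by
    apply le_antisymm
    · rw [span_le]
      rintro v ⟨j, hj, rfl⟩
      rw [Finset.mem_coe] at hj
      by_cases hjP : j ∈ P
      · exact subset_span ⟨j, hjP, rfl⟩
      · rw [hzero j hj hjP]
        exact zero_mem _
    · exact span_mono (Set.image_mono (by exact_mod_cast Finset.filter_subset _ _))
  -- the pivot columns form a linearly independent family
  set v : {j // j ∈ P} → ({i // i ∈ S} → ZMod 2) := fun j => colV R S j.1 with hv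
  have hrange : Set.range v = colS R S P := by
    ext w
    constructor
    · rintro ⟨j, rfl⟩
      exact ⟨j.1, j.2, rfl⟩
    · rintro ⟨j, hj, rfl⟩
      rw [Finset.mem_coe] at hj
      exact ⟨⟨j, hj⟩, rfl⟩
  have hspec : ∀ j : {j // j ∈ P}, ∃ i, i ∈ S ∧ IsLowF h R i j.1 := by
    intro j
    have := (Finset.mem_filter.1 j.2).2
    tauto
  choose lowi hlowS hlowIsLow using hspec
  have hindep : LinearIndependent (ZMod 2) v := by
    rw [linearIndependent_iff']
    intro s g hsum
    by_contra hexist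
    push_neg at hexist
    obtain ⟨jj, hjjs, hgjj⟩ := hexist
    set s' := s.filter fun j => g j ≠ 0 with hs'
    obtain ⟨js, hjs', hmax⟩ := Finset.exists_max_image s' (fun j => h (lowi j))
      ⟨jj, Finset.mem_filter.2 ⟨hjjs, hgjj⟩⟩
    have hjss : js ∈ s := (Finset.mem_filter.1 hjs').1
    have hgs : g js ≠ 0 := (Finset.mem_filter.1 hjs').2
    have hlowjs := hlowIsLow js
    have heval := congrFun hsum ⟨lowi js, hlowS js⟩
    rw [Finset.sum_apply] at heval
    have hsingle : ∑ j ∈ s, (g j • v j) ⟨lowi js, hlowS js⟩ = g js * R (lowi js) js.1 := by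
      refine Finset.sum_eq_single_of_mem js hjss ?_ 
      intro j hj hne
      simp only [Pi.smul_apply, smul_eq_mul, hv, colV]
      by_cases hgj : g j = 0
      · rw [hgj, zero_mul]
      · by_cases hR : R (lowi js) j.1 = 0
        · rw [hR, mul_zero]
        · exfalso
          have h1 : h (lowi js) ≤ h (lowi j) := (hlowIsLow j).2 _ hR
          have h2 : h (lowi j) ≤ h (lowi js) := hmax j (Finset.mem_filter.2 ⟨hj, hgj⟩)
          have heq : lowi j = lowi js := hinj (le_antisymm h2 h1)
          have : j.1 = js.1 := hdist _ _ _ (heq ▸ hlowIsLow j) hlowjs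
          exact hne (Subtype.ext this)
    rw [hsingle] at heval
    rcases mul_eq_zero.1 heval with h0 | h0
    · exact hgs h0
    · exact hlowjs.1 h0
  have hcard := finrank_span_eq_card hindep
  rw [hrange] at hcard
  rw [rk, hspan, hcard, Fintype.card_coe]

lemma span_eval_zero {s : Set ({i // i ∈ S} → ZMod 2)} {i₀ : {i // i ∈ S}}
    (h : ∀ v ∈ s, v i₀ = 0) {z : {i // i ∈ S} → ZMod 2}
    (hz : z ∈ span (ZMod 2) s) : z i₀ = 0 := by
  have hker : span (ZMod 2) s ≤
      LinearMap.ker (LinearMap.proj (R := ZMod 2) (φ := fun _ : {i // i ∈ S} => ZMod 2) i₀) := by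
    rw [span_le]
    intro v hv
    simp only [SetLike.mem_coe, LinearMap.mem_ker, LinearMap.proj_apply]
    exact h v hv
  have := hker hz
  simpa using this

lemma filter_insert_card {α : Type*} [DecidableEq α] (T : Finset α) (P : α → Prop)
    [DecidablePred P] {j : α} (hj : j ∉ T) :
    ((insert j T).filter P).card = (T.filter P).card + (if P j then 1 else 0) := by
  rw [Finset.filter_insert]
  split_ifs
  · exact Finset.card_insert_of_notMem (fun hmem => hj (Finset.mem_filter.1 hmem).1)
  · rfl

lemma pin_exists {α : Type*} [DecidableEq α] {T : Finset α} {P : α → Prop}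
    [DecidablePred P] {j : α} (hj : j ∉ T) {T' : Finset α} (hT' : T' = insert j T) {n : ℕ}
    (h1 : (T'.filter P).card = n + 1) (h2 : (T.filter P).card = n) : P j := by
  subst hT'
  have h3 := filter_insert_card T P hj
  split_ifs at h3 with hP
  · exact hP
  · omega

lemma pin_not {α : Type*} [DecidableEq α] {T : Finset α} {P : α → Prop}
    [DecidablePred P] {j : α} (hj : j ∉ T) {T' : Finset α} (hT' : T' = insert j T) {n : ℕ}
    (h1 : (T'.filter P).card = n) (h2 : (T.filter P).card = n) : ¬ P j := by
  subst hT'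
  have h3 := filter_insert_card T P hj
  split_ifs at h3 with hP
  · omega
  · exact hP

end Aux

/-- Transposition of two consecutive birth-giving cells `a` and `x` of nested
birth-death pairs `(a,b)` and `(x,y)` of matching dimension, in the reduced
situation where `(x,y)` is shallow: if `a` is a facet of `y` the transposition
is a BB-type switch and the pairs become `(a,y)` and `(x,b)`; otherwise the
pairs `(x,y)` and `(a,b)` are unchanged. -/
theorem stmt12 {C : Type*} [Fintype C] [DecidableEq C]
    (facet : C → C → Prop) (dim : C → ℤ) (f : C → ℝ)
    (hdim : ∀ u v, facet u v → dim u = dim v - 1)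
    (hinj : Function.Injective f)
    (hfil : ∀ u v, facet u v → f u < f v)
    (x y a b : C)
    (hdims : dim a = dim x)
    (hax : f a < f x) (hcons : ∀ c, ¬ (f a < f c ∧ f c < f x))
    (hnested : f x < f y ∧ f y < f b)
    (hxy : ShallowF facet f x y)
    (Rf : Matrix C C (ZMod 2)) (hRf : IsReductionF f (bdry facet) Rf)
    (hab : IsLowF f Rf a b) :
    ∀ Rg : Matrix C C (ZMod 2),
      IsReductionF (f ∘ Equiv.swap a x) (bdry facet) Rg →
      ((facet a y →
          IsLowF (f ∘ Equiv.swap a x) Rg a y ∧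
            IsLowF (f ∘ Equiv.swap a x) Rg x b) ∧
        (¬ facet a y →
          IsLowF (f ∘ Equiv.swap a x) Rg x y ∧
            IsLowF (f ∘ Equiv.swap a x) Rg a b)) := by
  classical
  obtain ⟨hxy1, hxy2, hxy3⟩ := hxy
  obtain ⟨hxly, hylb⟩ := hnested
  intro Rg hRg
  set g : C → ℝ := f ∘ Equiv.swap a x with hgdef
  set Δ : Matrix C C (ZMod 2) := bdry facet with hΔdef
  obtain ⟨Vf, hVf1, hVf2, hRfeq, hdistf⟩ := hRf
  obtain ⟨Vg, hVg1, hVg2, hRgeq, hdistg⟩ := hRg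
  have ginj : Function.Injective g := hinj.comp (Equiv.swap a x).injective
  have hax_ne : a ≠ x := fun h => lt_irrefl _ (h ▸ hax)
  have hga : g a = f x := by simp [hgdef, Equiv.swap_apply_left]
  have hgx : g x = f a := by simp [hgdef, Equiv.swap_apply_right]
  have hgo : ∀ c, c ≠ a → c ≠ x → g c = f c := fun c h1 h2 => by
    simp [hgdef, Equiv.swap_apply_of_ne_of_ne h1 h2]
  have hΔiff : ∀ i j, Δ i j ≠ 0 ↔ facet i j := by
    intro i j
    by_cases hf : facet i j <;> simp [hΔdef, bdry, hf]
  have hΔxy : Δ x y ≠ 0 := (hΔiff x y).2 hxy1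
  have hΔxy1 : Δ x y = 1 := by simp [hΔdef, bdry, hxy1]
  -- the relevant finsets
  set U : Finset C := Finset.univ.filter (fun c => f x < f c) with hU
  set Ty' : Finset C := Finset.univ.filter (fun c => f c < f y) with hTy'
  set Tb' : Finset C := Finset.univ.filter (fun c => f c < f b) with hTb'
  set Ty : Finset C := insert y Ty' with hTy
  set Tb : Finset C := insert b Tb' with hTb
  set Sx : Finset C := insert x U with hSx
  set Sa : Finset C := insert a U with hSa
  set Sax : Finset C := insert a Sx with hSax
  have hyTy' : y ∉ Ty' := by simp [hTy']
  have hbTb' : b ∉ Tb' := by simp [hTb']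
  have hbTy' : b ∉ Ty' := by
    simp only [hTy', Finset.mem_filter, Finset.mem_univ, true_and]
    exact not_lt.2 hylb.le
  have hyTb' : y ∈ Tb' := by
    simp only [hTb', Finset.mem_filter, Finset.mem_univ, true_and]
    exact hylb
  have hyTy : y ∈ Ty := Finset.mem_insert_self _ _
  have haU : a ∉ U := by
    simp only [hU, Finset.mem_filter, Finset.mem_univ, true_and]
    exact not_lt.2 hax.le
  have hxU : x ∉ U := by
    simp only [hU, Finset.mem_filter, Finset.mem_univ, true_and]
    exact lt_irrefl _
  have hxSax : x ∈ Sax := by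
    rw [hSax, hSx]
    exact Finset.mem_insert_of_mem (Finset.mem_insert_self _ _)
  have haSax : a ∈ Sax := Finset.mem_insert_self _ _
  have haSa : a ∈ Sa := Finset.mem_insert_self _ _
  have hUSa : U ⊆ Sa := by rw [hSa]; exact Finset.subset_insert _ _
  have hUSx : U ⊆ Sx := by rw [hSx]; exact Finset.subset_insert _ _
  have hSaSax : Sa ⊆ Sax := by
    rw [hSa, hSax, hSx]
    exact Finset.insert_subset_insert a (Finset.subset_insert _ _)
  have hUSax : U ⊆ Sax := hUSa.trans hSaSax
  have hSxSax : Sx ⊆ Sax := by rw [hSax]; exact Finset.subset_insert _ _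
  -- membership of a, x, y in the column sets
  have haTy' : a ∈ Ty' := by
    simp only [hTy', Finset.mem_filter, Finset.mem_univ, true_and]
    exact hax.trans hxly
  have hxTy' : x ∈ Ty' := by
    simp only [hTy', Finset.mem_filter, Finset.mem_univ, true_and]
    exact hxly
  have haTb' : a ∈ Tb' := by
    simp only [hTb', Finset.mem_filter, Finset.mem_univ, true_and]
    exact (hax.trans hxly).trans hylb
  have hxTb' : x ∈ Tb' := by
    simp only [hTb', Finset.mem_filter, Finset.mem_univ, true_and]
    exact hxly.trans hylb
  -- f-closedness
  have hUupf : ∀ i ∈ U, ∀ i', f i ≤ f i' → i' ∈ U := by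
    intro i hi i' hle
    simp only [hU, Finset.mem_filter, Finset.mem_univ, true_and] at hi ⊢
    exact lt_of_lt_of_le hi hle
  have hSxupf : ∀ i ∈ Sx, ∀ i', f i ≤ f i' → i' ∈ Sx := by
    intro i hi i' hle
    rw [hSx, Finset.mem_insert] at hi ⊢
    rcases hi with rfl | hi
    · rcases eq_or_lt_of_le hle with he | hl
      · exact Or.inl (hinj he.symm)
      · refine Or.inr ?_
        simp only [hU, Finset.mem_filter, Finset.mem_univ, true_and]
        exact hl
    · exact Or.inr (hUupf i hi i' hle)
  have hSaxupf : ∀ i ∈ Sax, ∀ i', f i ≤ f i' → i' ∈ Sax := by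
    intro i hi i' hle
    rw [hSax, Finset.mem_insert] at hi ⊢
    rcases hi with rfl | hi
    · rcases eq_or_lt_of_le hle with he | hl
      · exact Or.inl (hinj he.symm)
      · refine Or.inr ?_
        have hxle : f x ≤ f i' := by
          rcases (hcons i') with h
          by_contra hc
          push_neg at hc
          exact h ⟨hl, hc⟩
        exact hSxupf x (Finset.mem_insert_self _ _) i' hxle
    · exact Or.inr (hSxupf i hi i' hle)
  have hTy'downf : ∀ j ∈ Ty', ∀ k, f k ≤ f j → k ∈ Ty' := by
    intro j hj k hk
    simp only [hTy', Finset.mem_filter, Finset.mem_univ, true_and] at hj ⊢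
    exact lt_of_le_of_lt hk hj
  have hTb'downf : ∀ j ∈ Tb', ∀ k, f k ≤ f j → k ∈ Tb' := by
    intro j hj k hk
    simp only [hTb', Finset.mem_filter, Finset.mem_univ, true_and] at hj ⊢
    exact lt_of_le_of_lt hk hj
  have hTydownf : ∀ j ∈ Ty, ∀ k, f k ≤ f j → k ∈ Ty := by
    intro j hj k hk
    rw [hTy, Finset.mem_insert] at hj ⊢
    have hjy : f j ≤ f y := by
      rcases hj with rfl | hj
      · exact le_rfl
      · simp only [hTy', Finset.mem_filter, Finset.mem_univ, true_and] at hj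
        exact hj.le
    rcases eq_or_lt_of_le (hk.trans hjy) with he | hl
    · exact Or.inl (hinj he)
    · refine Or.inr ?_
      simp only [hTy', Finset.mem_filter, Finset.mem_univ, true_and]
      exact hl
  have hTbdownf : ∀ j ∈ Tb, ∀ k, f k ≤ f j → k ∈ Tb := by
    intro j hj k hk
    rw [hTb, Finset.mem_insert] at hj ⊢
    have hjy : f j ≤ f b := by
      rcases hj with rfl | hj
      · exact le_rfl
      · simp only [hTb', Finset.mem_filter, Finset.mem_univ, true_and] at hj
        exact hj.le
    rcases eq_or_lt_of_le (hk.trans hjy) with he | hl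
    · exact Or.inl (hinj he)
    · refine Or.inr ?_
      simp only [hTb', Finset.mem_filter, Finset.mem_univ, true_and]
      exact hl
  -- g-closedness
  have hswapinv : ∀ (T : Finset C), (a ∈ T ↔ x ∈ T) → ∀ c, Equiv.swap a x c ∈ T ↔ c ∈ T := by
    intro T hiff c
    rcases eq_or_ne c a with rfl | hca
    · rw [Equiv.swap_apply_left]; exact hiff.symm
    rcases eq_or_ne c x with rfl | hcx
    · rw [Equiv.swap_apply_right]; exact hiff
    · rw [Equiv.swap_apply_of_ne_of_ne hca hcx]
  have hgdown : ∀ (T : Finset C), (∀ j ∈ T, ∀ k, f k ≤ f j → k ∈ T) → (a ∈ T ↔ x ∈ T) →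
      ∀ j ∈ T, ∀ k, g k ≤ g j → k ∈ T := by
    intro T hdownf hiff j hj k hk
    have hk' : f (Equiv.swap a x k) ≤ f (Equiv.swap a x j) := hk
    exact (hswapinv T hiff k).1 (hdownf _ ((hswapinv T hiff j).2 hj) _ hk')
  have hgup : ∀ (S : Finset C), (∀ i ∈ S, ∀ i', f i ≤ f i' → i' ∈ S) → (a ∈ S ↔ x ∈ S) →
      ∀ i ∈ S, ∀ i', g i ≤ g i' → i' ∈ S := by
    intro S hupf hiff i hi i' hle
    have hle' : f (Equiv.swap a x i) ≤ f (Equiv.swap a x i') := hle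
    exact (hswapinv S hiff i').1 (hupf _ ((hswapinv S hiff i).2 hi) _ hle')
  have hUupg := hgup U hUupf (iff_of_false haU hxU)
  have hSaxupg := hgup Sax hSaxupf (iff_of_true haSax hxSax)
  have hTy'downg := hgdown Ty' hTy'downf (iff_of_true haTy' hxTy')
  have hTydowng := hgdown Ty hTydownf
    (iff_of_true (Finset.mem_insert_of_mem haTy') (Finset.mem_insert_of_mem hxTy'))
  have hTb'downg := hgdown Tb' hTb'downf (iff_of_true haTb' hxTb')
  have hTbdowng := hgdown Tb hTbdownf
    (iff_of_true (Finset.mem_insert_of_mem haTb') (Finset.mem_insert_of_mem hxTb'))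
  have hSaupg : ∀ i ∈ Sa, ∀ i', g i ≤ g i' → i' ∈ Sa := by
    intro i hi i' hle
    rw [hSa, Finset.mem_insert] at hi ⊢
    rcases eq_or_ne i' a with he | hi'a
    · exact Or.inl he
    refine Or.inr ?_
    have hine : i ≠ a ∧ i ≠ x → g i = f i := fun h => hgo i h.1 h.2
    rcases eq_or_ne i' x with he | hi'x
    · exfalso
      rw [he, hgx] at hle
      rcases hi with rfl | hi
      · rw [hga] at hle
        exact absurd hle (not_le.2 hax)
      · have hfi : f x < f i := by
          simpa only [hU, Finset.mem_filter, Finset.mem_univ, true_and] using hi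
        have hia : i ≠ a := fun h => haU (h ▸ hi)
        have hix : i ≠ x := fun h => hxU (h ▸ hi)
        rw [hgo i hia hix] at hle
        linarith
    · rw [hgo i' hi'a hi'x] at hle
      simp only [hU, Finset.mem_filter, Finset.mem_univ, true_and]
      rcases hi with rfl | hi
      · rw [hga] at hle
        exact lt_of_le_of_ne hle (fun he => hi'x (hinj he.symm))
      · have hfi : f x < f i := by
          simpa only [hU, Finset.mem_filter, Finset.mem_univ, true_and] using hi
        have hia : i ≠ a := fun h => haU (h ▸ hi)
        have hix : i ≠ x := fun h => hxU (h ▸ hi)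
        rw [hgo i hia hix] at hle
        linarith
  -- rank/count chains
  have hrkf : ∀ (S T : Finset C), (∀ i ∈ S, ∀ i', f i ≤ f i' → i' ∈ S) →
      (∀ j ∈ T, ∀ k, f k ≤ f j → k ∈ T) →
      rk Δ S T = (T.filter fun j => ∃ i ∈ S, IsLowF f Rf i j).card := by
    intro S T huS hdT
    rw [← rk_eq_lowCount f hinj Rf hdistf huS T, hRfeq,
      rk_mul f hinj Δ Vf hVf1 hVf2 hdT]
  have hrkg : ∀ (S T : Finset C), (∀ i ∈ S, ∀ i', g i ≤ g i' → i' ∈ S) →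
      (∀ j ∈ T, ∀ k, g k ≤ g j → k ∈ T) →
      rk Δ S T = (T.filter fun j => ∃ i ∈ S, IsLowF g Rg i j).card := by
    intro S T huS hdT
    rw [← rk_eq_lowCount g ginj Rg hdistg huS T, hRgeq,
      rk_mul g ginj Δ Vg hVg1 hVg2 hdT]
  -- boundary matrix facts from shallowness
  have hΔUy : ∀ u ∈ U, Δ u y = 0 := by
    intro u hu
    by_contra hne
    have := hxy2 u ((hΔiff u y).1 hne)
    simp only [hU, Finset.mem_filter, Finset.mem_univ, true_and] at hu
    linarith
  have hΔxTy' : ∀ j ∈ Ty', Δ x j = 0 := by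
    intro j hj
    by_contra hne
    have := hxy3 j ((hΔiff x j).1 hne)
    simp only [hTy', Finset.mem_filter, Finset.mem_univ, true_and] at hj
    linarith
  set p : ℕ := rk Δ U Ty' with hp
  set q : ℕ := rk Δ U Tb' with hq
  have R1 : rk Δ U Ty = p := by
    rw [hTy, rk_insert_col_zero Δ hΔUy]
  have R2 : rk Δ Sx Ty' = p := by
    rw [hSx, rk_insert_row_zero Δ Ty' hΔxTy']
  have R3 : rk Δ Sx Ty = p + 1 := by
    rw [hTy, rk_insert_col_pivot Δ (Finset.mem_insert_self x U) hΔxy hΔxTy', R2]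
  -- (x, y) is a pivot pair of Rf
  have hlowxy : IsLowF f Rf x y := by
    have c1 : (Ty.filter fun j => ∃ i ∈ Sx, IsLowF f Rf i j).card = p + 1 := by
      rw [← hrkf Sx Ty hSxupf hTydownf]; exact R3
    have c2 : (Ty'.filter fun j => ∃ i ∈ Sx, IsLowF f Rf i j).card = p := by
      rw [← hrkf Sx Ty' hSxupf hTy'downf]; exact R2
    have c3 : (Ty.filter fun j => ∃ i ∈ U, IsLowF f Rf i j).card = p := by
      rw [← hrkf U Ty hUupf hTydownf]; exact R1
    have c4 : (Ty'.filter fun j => ∃ i ∈ U, IsLowF f Rf i j).card = p := by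
      rw [← hrkf U Ty' hUupf hTy'downf]
    have hex : ∃ i ∈ Sx, IsLowF f Rf i y :=
      pin_exists (P := fun j => ∃ i ∈ Sx, IsLowF f Rf i j) hyTy' hTy c1 c2
    have hnx : ¬ ∃ i ∈ U, IsLowF f Rf i y :=
      pin_not (P := fun j => ∃ i ∈ U, IsLowF f Rf i j) hyTy' hTy c3 c4
    obtain ⟨i, hiSx, hlow⟩ := hex
    rw [hSx, Finset.mem_insert] at hiSx
    rcases hiSx with rfl | hiU
    · exact hlow
    · exact absurd ⟨i, hiU, hlow⟩ hnx
  have hrowuniqf : ∀ i i' j, IsLowF f Rf i j → IsLowF f Rf i' j → i = i' :=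
    fun i i' j h1 h2 => hinj (le_antisymm (h2.2 i h1.1) (h1.2 i' h2.1))
  -- counting over rows a and x in terms of rows U
  have hcSax : ∀ T : Finset C, y ∉ T → b ∉ T →
      T.filter (fun j => ∃ i ∈ Sax, IsLowF f Rf i j) =
        T.filter (fun j => ∃ i ∈ U, IsLowF f Rf i j) := by
    intro T hyT hbT
    apply Finset.filter_congr
    intro j hj
    constructor
    · rintro ⟨i, hiSax, hlow⟩
      rw [hSax, Finset.mem_insert, hSx, Finset.mem_insert] at hiSax
      rcases hiSax with rfl | rfl | hiU
      · exact absurd (hdistf _ _ _ hlow hab ▸ hj) hbT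
      · exact absurd (hdistf _ _ _ hlow hlowxy ▸ hj) hyT
      · exact ⟨i, hiU, hlow⟩
    · rintro ⟨i, hiU, hlow⟩
      exact ⟨i, hUSax hiU, hlow⟩
  have hkeyb : ∀ S₀ : Finset C, x ∈ S₀ → U ⊆ S₀ → S₀ ⊆ Sax →
      Tb'.filter (fun j => ∃ i ∈ S₀, IsLowF f Rf i j) =
        insert y (Tb'.filter fun j => ∃ i ∈ U, IsLowF f Rf i j) := by
    intro S₀ hxS hUS hSS
    ext m
    simp only [Finset.mem_filter, Finset.mem_insert]
    constructor
    · rintro ⟨hm, i, hiS, hlow⟩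
      have hiSax := hSS hiS
      rw [hSax, Finset.mem_insert, hSx, Finset.mem_insert] at hiSax
      rcases hiSax with rfl | rfl | hiU
      · exact absurd (hdistf _ _ _ hlow hab ▸ hm) hbTb'
      · exact Or.inl (hdistf _ _ _ hlow hlowxy)
      · exact Or.inr ⟨hm, i, hiU, hlow⟩
    · rintro (rfl | ⟨hm, i, hiU, hlow⟩)
      · exact ⟨hyTb', x, hxS, hlowxy⟩
      · exact ⟨hm, i, hUS hiU, hlow⟩
  have hynotfil : y ∉ Tb'.filter (fun j => ∃ i ∈ U, IsLowF f Rf i j) := by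
    simp only [Finset.mem_filter, not_and]
    rintro - ⟨i, hiU, hlow⟩
    exact hxU (hrowuniqf _ _ _ hlow hlowxy ▸ hiU)
  have cA : rk Δ Sax Ty' = p := by
    rw [hrkf Sax Ty' hSaxupf hTy'downf, hcSax Ty' hyTy' hbTy',
      ← hrkf U Ty' hUupf hTy'downf]
  have cB : rk Δ Sax Tb' = q + 1 := by
    rw [hrkf Sax Tb' hSaxupf hTb'downf, hkeyb Sax hxSax hUSax subset_rfl,
      Finset.card_insert_of_notMem hynotfil, ← hrkf U Tb' hUupf hTb'downf]
  have cC : rk Δ Sx Tb' = q + 1 := by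
    rw [hrkf Sx Tb' hSxupf hTb'downf, hkeyb Sx (Finset.mem_insert_self x U) hUSx hSxSax,
      Finset.card_insert_of_notMem hynotfil, ← hrkf U Tb' hUupf hTb'downf]
  have cD : rk Δ U Tb = q := by
    rw [hrkf U Tb hUupf hTbdownf, hTb,
      filter_insert_card Tb' (fun j => ∃ i ∈ U, IsLowF f Rf i j) hbTb']
    have hnb : ¬ ∃ i ∈ U, IsLowF f Rf i b := by
      rintro ⟨i, hiU, hlow⟩
      exact haU (hrowuniqf _ _ _ hlow hab ▸ hiU)
    rw [if_neg hnb, add_zero, ← hrkf U Tb' hUupf hTb'downf]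
  have cE : rk Δ Sax Tb = q + 2 := by
    rw [hrkf Sax Tb hSaxupf hTbdownf, hTb,
      filter_insert_card Tb' (fun j => ∃ i ∈ Sax, IsLowF f Rf i j) hbTb',
      if_pos ⟨a, haSax, hab⟩, ← hrkf Sax Tb' hSaxupf hTb'downf, cB]
  have cF : rk Δ Sa Ty' = p := by
    have h1 : rk Δ Sa Ty' ≤ p := by
      rw [← cA]; exact rk_mono_rows Δ Ty' hSaSax
    have h2 : p ≤ rk Δ Sa Ty' := by
      rw [hp]; exact rk_mono_rows Δ Ty' hUSa
    omega
  have cG : rk Δ Sa Tb = q + 1 := by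
    have h1 : rk Δ Sa Tb ≤ q + 1 := by
      have := rk_insert_row_le Δ U (T := Tb) a
      rw [← hSa, cD] at this
      exact this
    have h2 : q + 2 ≤ rk Δ Sa Tb + 1 := by
      have hcomm : Sax = insert x Sa := by
        rw [hSax, hSx, hSa, Finset.insert_comm]
      have := rk_insert_row_le Δ Sa (T := Tb) x
      rw [← hcomm, cE] at this
      exact this
    omega
  refine ⟨fun hfay => ?_, fun hfay => ?_⟩
  · -- `a` is a facet of `y`: the pairs switch to (a, y) and (x, b)
    have hΔay : Δ a y ≠ 0 := (hΔiff a y).2 hfay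
    have F1 : rk Δ Sa Ty = p + 1 := by
      rw [hSa, rk_insert_row_pivot Δ Ty hyTy hΔay hΔUy, R1]
    have F2 : rk Δ Sa Tb' = q + 1 := by
      rw [hSa, rk_insert_row_pivot Δ Tb' hyTb' hΔay hΔUy, hq]
    constructor
    · -- IsLowF g Rg a y
      have c1 : (Ty.filter fun j => ∃ i ∈ Sa, IsLowF g Rg i j).card = p + 1 := by
        rw [← hrkg Sa Ty hSaupg hTydowng]; exact F1
      have c2 : (Ty'.filter fun j => ∃ i ∈ Sa, IsLowF g Rg i j).card = p := by
        rw [← hrkg Sa Ty' hSaupg hTy'downg]; exact cF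
      have c3 : (Ty.filter fun j => ∃ i ∈ U, IsLowF g Rg i j).card = p := by
        rw [← hrkg U Ty hUupg hTydowng]; exact R1
      have c4 : (Ty'.filter fun j => ∃ i ∈ U, IsLowF g Rg i j).card = p := by
        rw [← hrkg U Ty' hUupg hTy'downg]
      have hex : ∃ i ∈ Sa, IsLowF g Rg i y :=
        pin_exists (P := fun j => ∃ i ∈ Sa, IsLowF g Rg i j) hyTy' hTy c1 c2
      have hnx : ¬ ∃ i ∈ U, IsLowF g Rg i y :=
        pin_not (P := fun j => ∃ i ∈ U, IsLowF g Rg i j) hyTy' hTy c3 c4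
      obtain ⟨i, hiSa, hlow⟩ := hex
      rw [hSa, Finset.mem_insert] at hiSa
      rcases hiSa with rfl | hiU
      · exact hlow
      · exact absurd ⟨i, hiU, hlow⟩ hnx
    · -- IsLowF g Rg x b
      have c1 : (Tb.filter fun j => ∃ i ∈ Sax, IsLowF g Rg i j).card = q + 2 := by
        rw [← hrkg Sax Tb hSaxupg hTbdowng]; exact cE
      have c2 : (Tb'.filter fun j => ∃ i ∈ Sax, IsLowF g Rg i j).card = q + 1 := by
        rw [← hrkg Sax Tb' hSaxupg hTb'downg]; exact cB
      have c3 : (Tb.filter fun j => ∃ i ∈ Sa, IsLowF g Rg i j).card = q + 1 := by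
        rw [← hrkg Sa Tb hSaupg hTbdowng]; exact cG
      have c4 : (Tb'.filter fun j => ∃ i ∈ Sa, IsLowF g Rg i j).card = q + 1 := by
        rw [← hrkg Sa Tb' hSaupg hTb'downg]; exact F2
      have hex : ∃ i ∈ Sax, IsLowF g Rg i b :=
        pin_exists (P := fun j => ∃ i ∈ Sax, IsLowF g Rg i j) hbTb' hTb c1 c2
      have hnx : ¬ ∃ i ∈ Sa, IsLowF g Rg i b :=
        pin_not (P := fun j => ∃ i ∈ Sa, IsLowF g Rg i j) hbTb' hTb c3 c4
      obtain ⟨i, hiSax, hlow⟩ := hex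
      rw [hSax, Finset.mem_insert, hSx, Finset.mem_insert] at hiSax
      rcases hiSax with rfl | rfl | hiU
      · exact absurd ⟨i, haSa, hlow⟩ hnx
      · exact hlow
      · exact absurd ⟨i, hUSa hiU, hlow⟩ hnx
  · -- `a` is not a facet of `y`: the pairs are unchanged
    have hΔay : Δ a y = 0 := by simp [hΔdef, bdry, hfay]
    have G1 : rk Δ Sa Ty = p := by
      have hz : ∀ i ∈ Sa, Δ i y = 0 := by
        intro i hi
        rw [hSa, Finset.mem_insert] at hi
        rcases hi with rfl | hi
        · exact hΔay
        · exact hΔUy i hi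
      rw [hTy, rk_insert_col_zero Δ hz, cF]
    have G2 : rk Δ Sax Ty = p + 1 := by
      rw [hTy, rk_insert_col_pivot Δ hxSax hΔxy hΔxTy', cA]
    have G3 : rk Δ Sa Tb' = q := by
      have heq : rk Δ (insert a Sx) Tb' = rk Δ Sx Tb' := by
        rw [← hSax, cB, cC]
      have hmem := (rk_insert_row_eq_iff Δ Tb').1 heq
      rw [hSx, colS_insert] at hmem
      obtain ⟨c, z, hzU, hvz⟩ := Submodule.mem_span_insert.1 hmem
      have hzy : z ⟨y, hyTb'⟩ = 0 := by
        refine span_eval_zero ?_ hzU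
        rintro v ⟨u, huU, rfl⟩
        rw [Finset.mem_coe] at huU
        exact hΔUy u huU
      have hcf := congrFun hvz ⟨y, hyTb'⟩
      simp only [colV, Matrix.transpose_apply, Pi.add_apply, Pi.smul_apply,
        smul_eq_mul, hzy, add_zero, hΔay, hΔxy1, mul_one] at hcf
      rw [← hcf, zero_smul, zero_add] at hvz
      have : rk Δ (insert a U) Tb' = rk Δ U Tb' :=
        (rk_insert_row_eq_iff Δ Tb').2 (hvz ▸ hzU)
      rw [hSa, this, hq]
    constructor
    · -- IsLowF g Rg x y
      have c1 : (Ty.filter fun j => ∃ i ∈ Sax, IsLowF g Rg i j).card = p + 1 := by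
        rw [← hrkg Sax Ty hSaxupg hTydowng]; exact G2
      have c2 : (Ty'.filter fun j => ∃ i ∈ Sax, IsLowF g Rg i j).card = p := by
        rw [← hrkg Sax Ty' hSaxupg hTy'downg]; exact cA
      have c3 : (Ty.filter fun j => ∃ i ∈ Sa, IsLowF g Rg i j).card = p := by
        rw [← hrkg Sa Ty hSaupg hTydowng]; exact G1
      have c4 : (Ty'.filter fun j => ∃ i ∈ Sa, IsLowF g Rg i j).card = p := by
        rw [← hrkg Sa Ty' hSaupg hTy'downg]; exact cF
      have hex : ∃ i ∈ Sax, IsLowF g Rg i y :=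
        pin_exists (P := fun j => ∃ i ∈ Sax, IsLowF g Rg i j) hyTy' hTy c1 c2
      have hnx : ¬ ∃ i ∈ Sa, IsLowF g Rg i y :=
        pin_not (P := fun j => ∃ i ∈ Sa, IsLowF g Rg i j) hyTy' hTy c3 c4
      obtain ⟨i, hiSax, hlow⟩ := hex
      rw [hSax, Finset.mem_insert, hSx, Finset.mem_insert] at hiSax
      rcases hiSax with rfl | rfl | hiU
      · exact absurd ⟨i, haSa, hlow⟩ hnx
      · exact hlow
      · exact absurd ⟨i, hUSa hiU, hlow⟩ hnx
    · -- IsLowF g Rg a b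
      have c1 : (Tb.filter fun j => ∃ i ∈ Sa, IsLowF g Rg i j).card = q + 1 := by
        rw [← hrkg Sa Tb hSaupg hTbdowng]; exact cG
      have c2 : (Tb'.filter fun j => ∃ i ∈ Sa, IsLowF g Rg i j).card = q := by
        rw [← hrkg Sa Tb' hSaupg hTb'downg]; exact G3
      have c3 : (Tb.filter fun j => ∃ i ∈ U, IsLowF g Rg i j).card = q := by
        rw [← hrkg U Tb hUupg hTbdowng]; exact cD
      have c4 : (Tb'.filter fun j => ∃ i ∈ U, IsLowF g Rg i j).card = q := by
        rw [← hrkg U Tb' hUupg hTb'downg]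
      have hex : ∃ i ∈ Sa, IsLowF g Rg i b :=
        pin_exists (P := fun j => ∃ i ∈ Sa, IsLowF g Rg i j) hbTb' hTb c1 c2
      have hnx : ¬ ∃ i ∈ U, IsLowF g Rg i b :=
        pin_not (P := fun j => ∃ i ∈ U, IsLowF g Rg i j) hbTb' hTb c3 c4
      obtain ⟨i, hiSa, hlow⟩ := hex
      rw [hSa, Finset.mem_insert] at hiSa
      rcases hiSa with rfl | hiU
      · exact hlow
      · exact absurd ⟨i, hiU, hlow⟩ hnx
end

section
/- Let (x,y) and (a,b) be birth-death pairs of a filter that are connected by an arc in the depth poset (i.e., in every shallow cancellation order, (x,y) must be canceled before (a,b)). Then the pairs are nested: f(a) < f(x) < f(y) < f(b), and the dimensions match: dim a = dim x and dim b = dim y. -/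
variable {α : Type*}

/-- `φ` precedes `ψ` in every shallow cancellation order of `(K, f)`. -/
def DepthLe [DecidableEq α] (f : α → ℝ) (K : PreCpx α) (φ ψ : α × α) : Prop :=
  ∀ L : List (α × α), IsSCO f K L →
    ∀ i j : ℕ, L[i]? = some φ → L[j]? = some ψ → i ≤ j

/-- The birth-death pairs of `(K, f)`: the pairs canceled in some shallow
cancellation order. -/
def BD [DecidableEq α] (f : α → ℝ) (K : PreCpx α) : Set (α × α) :=
  {φ | ∃ L : List (α × α), IsSCO f K L ∧ φ ∈ L}

section Aux

variable [DecidableEq α] {K : PreCpx α} {f : α → ℝ}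

/-- Structure of facet relations after a cancellation. -/
lemma cancel_facet {u v p q : α} (h : (cancel K u v).facet p q) :
    p ≠ u ∧ p ≠ v ∧ q ≠ u ∧ q ≠ v ∧
      (K.facet p q ∨ (K.facet p v ∧ K.facet u q)) := by
  obtain ⟨h1, h2, h3, h4, h5⟩ := h
  refine ⟨h1, h2, h3, h4, ?_⟩
  rcases h5 with ⟨h, _⟩ | ⟨h, _⟩
  · exact Or.inl h
  · exact Or.inr h

/-- Cancelling a shallow pair preserves the filtered-complex property. -/
lemma isFilter_cancel {u v : α} (hK : IsFilter K f) (hs : Shallow K f u v) :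
    IsFilter (cancel K u v) f := by
  obtain ⟨hmem, hinj, hlt⟩ := hK
  obtain ⟨huv, hmax, hmin⟩ := hs
  refine ⟨?_, ?_, ?_⟩
  · intro p q h
    obtain ⟨h1, h2, h3, h4, h5⟩ := cancel_facet h
    have hpq : p ∈ K.cells ∧ q ∈ K.cells := by
      rcases h5 with h | ⟨ha, hb⟩
      · exact hmem _ _ h
      · exact ⟨(hmem _ _ ha).1, (hmem _ _ hb).2⟩
    constructor
    · show p ∈ K.cells \ {u, v}
      rw [Finset.mem_sdiff]
      exact ⟨hpq.1, by simp [h1, h2]⟩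
    · show q ∈ K.cells \ {u, v}
      rw [Finset.mem_sdiff]
      exact ⟨hpq.2, by simp [h3, h4]⟩
  · refine hinj.mono ?_
    intro z hz
    have : z ∈ K.cells \ {u, v} := hz
    exact (Finset.mem_sdiff.mp this).1
  · intro p q h
    obtain ⟨h1, h2, h3, h4, h5⟩ := cancel_facet h
    rcases h5 with h | ⟨ha, hb⟩
    · exact hlt _ _ h
    · calc f p ≤ f u := hmax _ ha
        _ < f v := hlt _ _ huv
        _ ≤ f q := hmin _ hb

/-- Cancelling preserves the dimension property. -/
lemma hdim_cancel {dim : α → ℤ} {u v : α}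
    (hd : ∀ p q, K.facet p q → dim p = dim q - 1) (huv : K.facet u v) :
    ∀ p q, (cancel K u v).facet p q → dim p = dim q - 1 := by
  intro p q h
  obtain ⟨_, _, _, _, h5⟩ := cancel_facet h
  rcases h5 with h | ⟨ha, hb⟩
  · exact hd _ _ h
  · have h1 := hd _ _ ha
    have h2 := hd _ _ hb
    have h3 := hd _ _ huv
    omega

/-- Generic induction over an SCO: if `P` is an invariant preserved by
shallow cancellations and `P` forces canceled pairs to satisfy `Q`, then all
pairs of an SCO satisfy `Q`. -/
lemma sco_forall (P : PreCpx α → Prop) (Q : α × α → Prop)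
    (hP : ∀ K' (p : α × α), P K' → Shallow K' f p.1 p.2 → P (cancel K' p.1 p.2))
    (hQ : ∀ K' (p : α × α), P K' → Shallow K' f p.1 p.2 → Q p) :
    ∀ (K' : PreCpx α) (L : List (α × α)), P K' → IsSCO f K' L → ∀ p ∈ L, Q p := by
  intro K' L
  induction L generalizing K' with
  | nil => intro _ _ p hp; simp at hp
  | cons p L ih =>
    intro hPK hsco q hq
    obtain ⟨hsh, hrest⟩ := hsco
    rcases List.mem_cons.mp hq with rfl | hq'
    · exact hQ K' q hPK hsh
    · exact ih (cancel K' p.1 p.2) (hP K' p hPK hsh) hrest q hq'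

/-- In an SCO of a filtered complex, every canceled pair has `f p.1 < f p.2`. -/
lemma sco_birth_lt_death (hK : IsFilter K f) {L : List (α × α)}
    (hL : IsSCO f K L) : ∀ p ∈ L, f p.1 < f p.2 :=
  sco_forall (fun K' => IsFilter K' f) (fun p => f p.1 < f p.2)
    (fun _ _ h hs => isFilter_cancel h hs)
    (fun _ p h hs => h.2.2 _ _ hs.1) K L hK hL

/-- In an SCO of a filtered complex with dimension function, every canceled
pair has `dim p.1 = dim p.2 - 1`. -/
lemma sco_dim {dim : α → ℤ} (hd : ∀ p q, K.facet p q → dim p = dim q - 1)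
    {L : List (α × α)} (hL : IsSCO f K L) : ∀ p ∈ L, dim p.1 = dim p.2 - 1 :=
  sco_forall (fun K' => ∀ p q, K'.facet p q → dim p = dim q - 1)
    (fun p => dim p.1 = dim p.2 - 1)
    (fun _ _ h hs => hdim_cancel h hs.1)
    (fun _ p h hs => h _ _ hs.1) K L hd hL

/-- Death values of pairs in an SCO are bounded below by any lower bound for
death cells in the starting complex. -/
lemma sco_death_lb (c : ℝ) (hc : ∀ p q, K.facet p q → c < f q)
    {L : List (α × α)} (hL : IsSCO f K L) : ∀ p ∈ L, c < f p.2 :=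
  sco_forall (fun K' => ∀ p q, K'.facet p q → c < f q) (fun p => c < f p.2)
    (by
      intro K' p h hs q r hqr
      obtain ⟨_, _, _, _, h5⟩ := cancel_facet hqr
      rcases h5 with h' | ⟨ha, hb⟩
      · exact h _ _ h'
      · exact h _ _ hb)
    (fun _ p h hs => h _ _ hs.1) K L hc hL

/-- Birth values of pairs in an SCO are bounded above by any upper bound for
birth cells in the starting complex. -/
lemma sco_birth_ub (c : ℝ) (hc : ∀ p q, K.facet p q → f p < c)
    {L : List (α × α)} (hL : IsSCO f K L) : ∀ p ∈ L, f p.1 < c :=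
  sco_forall (fun K' => ∀ p q, K'.facet p q → f p < c) (fun p => f p.1 < c)
    (by
      intro K' p h hs q r hqr
      obtain ⟨_, _, _, _, h5⟩ := cancel_facet hqr
      rcases h5 with h' | ⟨ha, hb⟩
      · exact h _ _ h'
      · exact h _ _ ha)
    (fun _ p h hs => h _ _ hs.1) K L hc hL

/-- If the starting complex has no relation of grade `d`, no pair of grade `d`
is ever canceled. -/
lemma sco_no_grade {dim : α → ℤ} (d : ℤ) (hc : ∀ p q, K.facet p q → dim p ≠ d)
    {L : List (α × α)} (hL : IsSCO f K L) : ∀ p ∈ L, dim p.1 ≠ d :=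
  sco_forall (fun K' => ∀ p q, K'.facet p q → dim p ≠ d) (fun p => dim p.1 ≠ d)
    (by
      intro K' p h hs q r hqr
      obtain ⟨_, _, _, _, h5⟩ := cancel_facet hqr
      rcases h5 with h' | ⟨ha, hb⟩
      · exact h _ _ h'
      · exact h _ _ ha)
    (fun _ p h hs => h _ _ hs.1) K L hc hL

end Aux

section Greedy

variable [Fintype α] [DecidableEq α] {f : α → ℝ}

/-- Cancelling strictly decreases the number of cells. -/
lemma cancel_card_lt {K : PreCpx α} {u v : α} (hu : u ∈ K.cells) :
    (cancel K u v).cells.card < K.cells.card := by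
  apply Finset.card_lt_card
  constructor
  · exact Finset.sdiff_subset
  · intro hsub
    have := hsub hu
    simp [cancel] at this

/-- Greedy min-death construction: any filtered complex admits an SCO whose
death values are strictly increasing. -/
lemma exists_sco_death_mono :
    ∀ n (K : PreCpx α), K.cells.card ≤ n → IsFilter K f →
      ∃ L, IsSCO f K L ∧ L.Pairwise (fun p q : α × α => f p.2 < f q.2) := by
  intro n
  induction n with
  | zero =>
    intro K hc hK
    refine ⟨[], ?_, List.Pairwise.nil⟩
    intro p q h
    have := (hK.1 p q h).1
    rw [Nat.le_zero, Finset.card_eq_zero] at hc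
    simp [hc] at this
  | succ n ih =>
    intro K hc hK
    by_cases hrel : ∃ p q, K.facet p q
    · obtain ⟨p0, q0, h0⟩ := hrel
      obtain ⟨b, hbT, hbmin⟩ := Set.exists_min_image {c | ∃ w, K.facet w c} f
        (Set.toFinite _) ⟨q0, p0, h0⟩
      obtain ⟨w0, hw0⟩ := hbT
      obtain ⟨a, haF, hamax⟩ := Set.exists_max_image {w | K.facet w b} f
        (Set.toFinite _) ⟨w0, hw0⟩
      have hsh : Shallow K f a b :=
        ⟨haF, fun a' h => hamax a' h, fun b' h => hbmin b' ⟨a, h⟩⟩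
      have haC : a ∈ K.cells := (hK.1 a b haF).1
      have hbC : b ∈ K.cells := (hK.1 a b haF).2
      have hcard : (cancel K a b).cells.card ≤ n := by
        have := cancel_card_lt (v := b) haC
        omega
      obtain ⟨L1, hL1, hP1⟩ := ih (cancel K a b) hcard (isFilter_cancel hK hsh)
      have hbound : ∀ p q, (cancel K a b).facet p q → f b < f q := by
        intro p q h
        obtain ⟨_, _, _, hq4, h5⟩ := cancel_facet h
        have hqT : q ∈ {c | ∃ w, K.facet w c} := by
          rcases h5 with h' | ⟨ha', hb'⟩
          · exact ⟨p, h'⟩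
          · exact ⟨a, hb'⟩
        have hle : f b ≤ f q := hbmin q hqT
        have hqC : q ∈ K.cells := by
          obtain ⟨w, hw⟩ := hqT
          exact (hK.1 w q hw).2
        rcases lt_or_eq_of_le hle with h' | h'
        · exact h'
        · exact absurd (hK.2.1 hbC hqC h') hq4.symm
      refine ⟨(a, b) :: L1, ⟨hsh, hL1⟩, List.Pairwise.cons ?_ hP1⟩
      intro q hq
      exact sco_death_lb (f b) hbound hL1 q hq
    · refine ⟨[], ?_, List.Pairwise.nil⟩
      intro p q h
      exact hrel ⟨p, q, h⟩

/-- Greedy max-birth construction: any filtered complex admits an SCO whose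
birth values are strictly decreasing. -/
lemma exists_sco_birth_anti :
    ∀ n (K : PreCpx α), K.cells.card ≤ n → IsFilter K f →
      ∃ L, IsSCO f K L ∧ L.Pairwise (fun p q : α × α => f q.1 < f p.1) := by
  intro n
  induction n with
  | zero =>
    intro K hc hK
    refine ⟨[], ?_, List.Pairwise.nil⟩
    intro p q h
    have := (hK.1 p q h).1
    rw [Nat.le_zero, Finset.card_eq_zero] at hc
    simp [hc] at this
  | succ n ih =>
    intro K hc hK
    by_cases hrel : ∃ p q, K.facet p q
    · obtain ⟨p0, q0, h0⟩ := hrel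
      obtain ⟨a, haT, hamax⟩ := Set.exists_max_image {c | ∃ w, K.facet c w} f
        (Set.toFinite _) ⟨p0, q0, h0⟩
      obtain ⟨w0, hw0⟩ := haT
      obtain ⟨b, hbF, hbmin⟩ := Set.exists_min_image {w | K.facet a w} f
        (Set.toFinite _) ⟨w0, hw0⟩
      have hsh : Shallow K f a b := by
        refine ⟨hbF, ?_, fun b' h => hbmin b' h⟩
        intro a' h
        exact hamax a' ⟨b, h⟩
      have haC : a ∈ K.cells := (hK.1 a b hbF).1
      have hbC : b ∈ K.cells := (hK.1 a b hbF).2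
      have hcard : (cancel K a b).cells.card ≤ n := by
        have := cancel_card_lt (v := b) haC
        omega
      obtain ⟨L1, hL1, hP1⟩ := ih (cancel K a b) hcard (isFilter_cancel hK hsh)
      have hbound : ∀ p q, (cancel K a b).facet p q → f p < f a := by
        intro p q h
        obtain ⟨hp1, _, _, _, h5⟩ := cancel_facet h
        have hpT : p ∈ {c | ∃ w, K.facet c w} := by
          rcases h5 with h' | ⟨ha', hb'⟩
          · exact ⟨q, h'⟩
          · exact ⟨b, ha'⟩
        have hle : f p ≤ f a := hamax p hpT
        have hpC : p ∈ K.cells := by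
          obtain ⟨w, hw⟩ := hpT
          exact (hK.1 p w hw).1
        rcases lt_or_eq_of_le hle with h' | h'
        · exact h'
        · exact absurd (hK.2.1 hpC haC h') hp1
      refine ⟨(a, b) :: L1, ⟨hsh, hL1⟩, List.Pairwise.cons ?_ hP1⟩
      intro q hq
      exact sco_birth_ub (f a) hbound hL1 q hq
    · refine ⟨[], ?_, List.Pairwise.nil⟩
      intro p q h
      exact hrel ⟨p, q, h⟩

/-- Grade-first construction: any filtered complex with a dimension function
admits an SCO in which all pairs of a fixed grade `d` are canceled before all
pairs of other grades. -/
lemma exists_sco_grade_first (dim : α → ℤ) (d : ℤ) :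
    ∀ n (K : PreCpx α), K.cells.card ≤ n → IsFilter K f →
      (∀ p q, K.facet p q → dim p = dim q - 1) →
      ∃ L, IsSCO f K L ∧
        L.Pairwise (fun p q : α × α => dim q.1 = d → dim p.1 = d) := by
  intro n
  induction n with
  | zero =>
    intro K hc hK _
    refine ⟨[], ?_, List.Pairwise.nil⟩
    intro p q h
    have := (hK.1 p q h).1
    rw [Nat.le_zero, Finset.card_eq_zero] at hc
    simp [hc] at this
  | succ n ih =>
    intro K hc hK hd
    by_cases hrel : ∃ p q, K.facet p q ∧ dim p = d
    · obtain ⟨p0, q0, h0, hd0⟩ := hrel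
      obtain ⟨b, hbT, hbmin⟩ := Set.exists_min_image
        {c | ∃ w, K.facet w c ∧ dim w = d} f (Set.toFinite _) ⟨q0, p0, h0, hd0⟩
      obtain ⟨w0, hw0, hdw0⟩ := hbT
      obtain ⟨a, haF, hamax⟩ := Set.exists_max_image {w | K.facet w b} f
        (Set.toFinite _) ⟨w0, hw0⟩
      have hda : dim a = d := by
        have h1 := hd _ _ haF
        have h2 := hd _ _ hw0
        omega
      have hsh : Shallow K f a b := by
        refine ⟨haF, fun a' h => hamax a' h, ?_⟩
        intro b' h
        exact hbmin b' ⟨a, h, hda⟩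
      have haC : a ∈ K.cells := (hK.1 a b haF).1
      have hcard : (cancel K a b).cells.card ≤ n := by
        have := cancel_card_lt (v := b) haC
        omega
      obtain ⟨L1, hL1, hP1⟩ := ih (cancel K a b) hcard (isFilter_cancel hK hsh)
        (hdim_cancel hd haF)
      refine ⟨(a, b) :: L1, ⟨hsh, hL1⟩, List.Pairwise.cons ?_ hP1⟩
      intro q _ _
      exact hda
    · -- no grade-d relation: any SCO works, since no grade-d pair appears
      obtain ⟨L, hL, hPd⟩ := exists_sco_death_mono (Nat.succ n) K hc hK
      have hnd : ∀ p ∈ L, dim p.1 ≠ d := by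
        refine sco_no_grade d ?_ hL
        intro p q h hpd
        exact hrel ⟨p, q, h, hpd⟩
      refine ⟨L, hL, ?_⟩
      clear hL hPd
      induction L with
      | nil => exact List.Pairwise.nil
      | cons p L ihL =>
        refine List.Pairwise.cons ?_
          (ihL (fun q hq => hnd q (List.mem_cons_of_mem p hq)))
        intro q hq hqd
        exact absurd hqd (hnd q (List.mem_cons_of_mem p hq))

end Greedy

section Main

variable [DecidableEq α] {f : α → ℝ}

/-- Extract a pairwise relation between two specified list members, the first
of which must precede the second. -/
lemma pairwise_of_order {φ ψ : α × α} {L : List (α × α)}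
    {R : α × α → α × α → Prop}
    (hφ : φ ∈ L) (hψ : ψ ∈ L) (hne : φ ≠ ψ)
    (hord : ∀ i j : ℕ, L[i]? = some φ → L[j]? = some ψ → i ≤ j)
    (hp : L.Pairwise R) : R φ ψ := by
  obtain ⟨i, hi⟩ := List.mem_iff_getElem?.mp hφ
  obtain ⟨j, hj⟩ := List.mem_iff_getElem?.mp hψ
  have hij : i ≤ j := hord i j hi hj
  have hij' : i ≠ j := by
    intro h
    rw [h, hj] at hi
    exact hne (Option.some_injective _ hi.symm)
  obtain ⟨hi', hie⟩ := List.getElem?_eq_some_iff.mp hi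
  obtain ⟨hj', hje⟩ := List.getElem?_eq_some_iff.mp hj
  have := List.pairwise_iff_getElem.mp hp i j hi' hj' (lt_of_le_of_ne hij hij')
  rwa [hie, hje] at this

end Main

/-- If two birth-death pairs `(x,y)` and `(a,b)` are connected by an arc of the
depth poset (i.e. `(x,y)` must be canceled before `(a,b)` in every shallow
cancellation order), then they are nested, `f a < f x < f y < f b`, and their
dimensions match. -/
theorem stmt15 {α : Type*} [Fintype α] [DecidableEq α]
    (K : PreCpx α) (f : α → ℝ) (dim : α → ℤ)
    (hK : IsFilter K f)
    (hdim : ∀ u v, K.facet u v → dim u = dim v - 1)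
    (x y a b : α) (hne : (x, y) ≠ (a, b))
    (hex : ∃ L : List (α × α), IsSCO f K L)
    (hBD : ∀ L : List (α × α), IsSCO f K L → (x, y) ∈ L ∧ (a, b) ∈ L)
    (harc : DepthLe f K (x, y) (a, b)) :
    (f a < f x ∧ f x < f y ∧ f y < f b) ∧ dim a = dim x ∧ dim b = dim y := by
  -- SCO with increasing deaths
  obtain ⟨L1, hL1, hP1⟩ := exists_sco_death_mono K.cells.card K (le_refl _) hK
  obtain ⟨hφ1, hψ1⟩ := hBD L1 hL1
  have hyb : f y < f b :=
    pairwise_of_order hφ1 hψ1 hne (harc L1 hL1) hP1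
  -- SCO with decreasing births
  obtain ⟨L2, hL2, hP2⟩ := exists_sco_birth_anti K.cells.card K (le_refl _) hK
  obtain ⟨hφ2, hψ2⟩ := hBD L2 hL2
  have hax : f a < f x :=
    pairwise_of_order hφ2 hψ2 hne (harc L2 hL2) hP2
  -- grade-first SCO with d = dim a
  obtain ⟨L3, hL3, hP3⟩ :=
    exists_sco_grade_first dim (dim a) K.cells.card K (le_refl _) hK hdim
  obtain ⟨hφ3, hψ3⟩ := hBD L3 hL3
  have hdax : dim x = dim a :=
    pairwise_of_order hφ3 hψ3 hne (harc L3 hL3) hP3 rfl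
  -- birth < death for (x,y)
  have hxy : f x < f y := sco_birth_lt_death hK hL1 (x, y) hφ1
  -- dimensions
  have hd1 : dim x = dim y - 1 := sco_dim hdim hL1 (x, y) hφ1
  have hd2 : dim a = dim b - 1 := sco_dim hdim hL1 (a, b) hψ1
  exact ⟨⟨hax, hxy, hyb⟩, hdax.symm, by omega⟩
end
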